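/- arXiv:1306.0224 — 4 statements merged into one kernel-verified Lean document; each statement's English description precedes it below -/
import Mathlib

section
/- In the quantum affine space A_q, the q-analogue of elementary symmetric functions e_n = Σ_{i₁<...<i_n} x_{i₁}⋯x_{i_n} and complete symmetric functions h_n = Σ_{i₁≤...≤i_n} x_{i₁}⋯x_{i_n} satisfy the relation Σ_{k=0}^n (-1)^k q^{k(k-1)/2} e_k h_{n-k} = 0 for all n ≥ 1, with h₀ = e₀ = 1. -/
open Finsupp

/-- The bicharacter exponent `θ(a,b) = Σ_{j > i} a_j b_i` for normalizing `x^a x^b` in `A_q`. -/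
def thetaExp (a b : ℕ →₀ ℕ) : ℕ :=
  ∑ j ∈ a.support, ∑ i ∈ b.support, if i < j then a j * b i else 0

variable {R : Type*} [CommRing R]

/-- The quantum affine space `A_q` modelled as functions on normal-form exponent vectors,
with product induced by `x^a · x^b = q^{θ(a,b)} x^{a+b}`. -/
noncomputable def mulW (q : R) (f g : (ℕ →₀ ℕ) → R) : (ℕ →₀ ℕ) → R :=
  fun γ => ∑ p ∈ Finset.HasAntidiagonal.antidiagonal γ, q ^ thetaExp p.1 p.2 * f p.1 * g p.2

/-- The collapse of a weak composition. -/
def collapse (γ : ℕ →₀ ℕ) : List ℕ := (γ.support.sort (· ≤ ·)).map γ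

/-- The `q`-analogue of the complete symmetric function:
`h_n = Σ_{i₁ ≤ … ≤ i_n} x_{i₁} ⋯ x_{i_n}`, i.e. the sum of all monomials of degree `n`. -/
def hW (n : ℕ) : (ℕ →₀ ℕ) → R := fun γ => if (γ.sum fun _ v => v) = n then 1 else 0

/-- The `q`-analogue of the elementary symmetric function:
`e_n = Σ_{i₁ < … < i_n} x_{i₁} ⋯ x_{i_n}`, i.e. the sum of all squarefree monomials of
degree `n`. -/
def eW (n : ℕ) : (ℕ →₀ ℕ) → R := fun γ => if collapse γ = List.replicate n 1 then 1 else 0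

/-!
The coefficient of `x^γ` in `e_k h_{n-k}` collects one term
`x^{1_S} · x^{γ - 1_S} = q^{θ(1_S, γ - 1_S)} x^γ` for every `k`-subset `S` of the support of `γ`
(and vanishes unless `|γ| = n`), so the coefficient of `x^γ` in the whole sum is a signed sum over
all subsets `S` of the support. Toggling the smallest index
`m` of the support in `S` flips the sign and preserves the exponent `binom(|S|, 2) + θ(1_S, γ - 1_S)`:
moving `x_m` from the `h`-factor to the front of the `e`-factor removes the `|S|` inversions between
`x_m` and the `x_j`, `j ∈ S`, and `binom(|S| + 1, 2) = binom(|S|, 2) + |S|`. Hence the terms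
cancel in pairs.
-/

open Finset

lemma Finset.sum_range_sum_powersetCard {α M : Type*} [AddCommMonoid M] {s : Finset α} {n : ℕ}
    (hs : #s ≤ n) (f : Finset α → M) :
    ∑ k ∈ range (n + 1), ∑ t ∈ powersetCard k s, f t = ∑ t ∈ s.powerset, f t := by
  rw [sum_powerset]
  refine (sum_subset (range_subset_range.mpr (by omega)) fun k _ hk => ?_).symm
  rw [powersetCard_eq_empty.mpr (by simp only [mem_range] at hk; omega), sum_empty]

lemma card_support_le_degree {ι : Type*} (γ : ι →₀ ℕ) : #γ.support ≤ degree γ := by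
  rw [card_eq_sum_ones, degree_apply]
  exact sum_le_sum fun i hi => Nat.one_le_iff_ne_zero.mpr (Finsupp.mem_support_iff.mp hi)

/-- The exponent vector of the squarefree monomial `∏_{i ∈ S} x_i`. -/
def oneOn {ι : Type*} [DecidableEq ι] (S : Finset ι) : ι →₀ ℕ :=
  ⟨S, fun i => if i ∈ S then 1 else 0, fun i => by simp⟩

section OneOn

variable {ι : Type*} [DecidableEq ι]

@[simp] lemma support_oneOn (S : Finset ι) : (oneOn S).support = S := rfl

lemma oneOn_apply (S : Finset ι) (i : ι) : oneOn S i = if i ∈ S then 1 else 0 := rfl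

@[simp] lemma degree_oneOn (S : Finset ι) : degree (oneOn S) = #S := by
  simp [degree_apply, oneOn_apply]

lemma oneOn_le_iff {S : Finset ι} {γ : ι →₀ ℕ} : oneOn S ≤ γ ↔ S ⊆ γ.support := by
  simp only [Finsupp.le_def, oneOn_apply, subset_iff, Finsupp.mem_support_iff]
  refine ⟨fun h i hi => ?_, fun h i => ?_⟩
  · have := h i; rw [if_pos hi] at this; omega
  · split_ifs with hi
    · have := h hi; omega
    · exact Nat.zero_le _

lemma oneOn_support_of_forall_eq_one {α : ι →₀ ℕ} (h : ∀ i ∈ α.support, α i = 1) :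
    oneOn α.support = α := by
  ext i
  rw [oneOn_apply]
  split_ifs with hi
  · exact (h i hi).symm
  · exact (Finsupp.notMem_support_iff.mp hi).symm

lemma oneOn_insert {S : Finset ι} {m : ι} (hm : m ∉ S) :
    oneOn (insert m S) = Finsupp.single m 1 + oneOn S := by
  ext i
  simp only [Finsupp.add_apply, oneOn_apply, Finsupp.single_apply, mem_insert]
  by_cases h : m = i
  · subst h; simp [hm]
  · simp [h, Ne.symm h]

end OneOn

lemma thetaExp_eq_sum (a b : ℕ →₀ ℕ) :
    thetaExp a b = a.sum fun j x => b.sum fun i y => if i < j then x * y else 0 := rfl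

lemma thetaExp_add_left (a a' b : ℕ →₀ ℕ) :
    thetaExp (a + a') b = thetaExp a b + thetaExp a' b := by
  simp only [thetaExp_eq_sum]
  refine Finsupp.sum_add_index' (fun _ => by simp) fun _ _ _ => ?_
  simp only [add_mul, ← Finsupp.sum_add, ite_add_zero]

lemma thetaExp_add_right (a b b' : ℕ →₀ ℕ) :
    thetaExp a (b + b') = thetaExp a b + thetaExp a b' := by
  simp only [thetaExp_eq_sum, ← Finsupp.sum_add]
  refine Finsupp.sum_congr fun j _ => Finsupp.sum_add_index' (fun _ => by simp) fun _ _ _ => ?_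
  simp only [mul_add, ite_add_zero]

lemma thetaExp_single_left_eq_zero {m c : ℕ} {b : ℕ →₀ ℕ} (h : ∀ i ∈ b.support, m ≤ i) :
    thetaExp (Finsupp.single m c) b = 0 := by
  rw [thetaExp_eq_sum, Finsupp.sum_single_index (by simp)]
  exact Finset.sum_eq_zero fun i hi => if_neg (Nat.not_lt.mpr (h i hi))

lemma thetaExp_oneOn_single {S : Finset ℕ} {m : ℕ} (h : ∀ j ∈ S, m < j) :
    thetaExp (oneOn S) (Finsupp.single m 1) = #S := by
  rw [thetaExp_eq_sum, Finsupp.sum, card_eq_sum_ones]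
  refine sum_congr rfl fun j hj => ?_
  rw [Finsupp.sum_single_index (by simp), if_pos (h j hj), oneOn_apply, if_pos hj]

lemma collapse_eq_replicate_one_iff {α : ℕ →₀ ℕ} {k : ℕ} :
    collapse α = List.replicate k 1 ↔ #α.support = k ∧ ∀ i ∈ α.support, α i = 1 := by
  rw [collapse, List.eq_replicate_iff]
  simp [Finset.length_sort, Finset.mem_sort]

lemma eW_oneOn (S : Finset ℕ) : eW #S (oneOn S) = (1 : R) :=
  if_pos (collapse_eq_replicate_one_iff.mpr ⟨rfl, fun i hi => by simpa [oneOn_apply] using hi⟩)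

lemma exists_oneOn_eq_of_eW_ne_zero {k : ℕ} {α : ℕ →₀ ℕ} (h : eW k α ≠ (0 : R)) :
    ∃ S, #S = k ∧ oneOn S = α := by
  by_cases hα : collapse α = List.replicate k 1
  · obtain ⟨hk, hone⟩ := collapse_eq_replicate_one_iff.mp hα
    exact ⟨α.support, hk, oneOn_support_of_forall_eq_one hone⟩
  · exact absurd (if_neg hα) h

lemma hW_apply (m : ℕ) (γ : ℕ →₀ ℕ) : hW m γ = if degree γ = m then (1 : R) else 0 := rfl

lemma hW_sub_oneOn {S : Finset ℕ} {γ : ℕ →₀ ℕ} (hS : S ⊆ γ.support) (m : ℕ) :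
    hW m (γ - oneOn S) = (hW (#S + m) γ : R) := by
  have h := congrArg degree (tsub_add_cancel_of_le (oneOn_le_iff.mpr hS))
  rw [map_add, degree_oneOn] at h
  simp only [hW_apply]
  congr 1
  apply propext
  omega

lemma mulW_eW_hW (q : R) (k m : ℕ) (γ : ℕ →₀ ℕ) :
    mulW q (eW k) (hW m) γ =
      ∑ S ∈ γ.support.powersetCard k, q ^ thetaExp (oneOn S) (γ - oneOn S) * hW (k + m) γ := by
  symm
  refine sum_of_injOn (fun S => (oneOn S, γ - oneOn S)) ?_ ?_ ?_ ?_
  · intro S _ T _ h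
    simpa using congrArg (fun p => p.1.support) h
  · intro S hS
    simp only [mem_coe, mem_powersetCard] at hS
    simp only [mem_coe, Finset.HasAntidiagonal.mem_antidiagonal]
    exact add_tsub_cancel_of_le (oneOn_le_iff.mpr hS.1)
  · rintro ⟨α, β⟩ hp hne
    by_contra h
    obtain ⟨S, rfl, rfl⟩ :=
      exists_oneOn_eq_of_eW_ne_zero (right_ne_zero_of_mul (left_ne_zero_of_mul h))
    rw [Finset.HasAntidiagonal.mem_antidiagonal] at hp
    refine hne ⟨S, ?_, ?_⟩
    · rw [mem_coe, mem_powersetCard, ← oneOn_le_iff, ← hp]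
      exact ⟨le_self_add, rfl⟩
    · simp [← hp]
  · intro S hS
    obtain ⟨hsub, rfl⟩ := mem_powersetCard.mp hS
    rw [eW_oneOn, hW_sub_oneOn hsub, mul_one]

/-- The contribution of `x^{1_S} · x^{γ - 1_S}` to the coefficient of `x^γ` in
`(-1)^k q^{binom(k, 2)} e_k h_{n-k}`, `k = |S|`, when `|γ| = n`. -/
noncomputable def signedWeight (q : R) (γ : ℕ →₀ ℕ) (S : Finset ℕ) : R :=
  (-1) ^ #S * q ^ ((#S).choose 2 + thetaExp (oneOn S) (γ - oneOn S))

lemma signedWeight_insert_of_le (q : R) {γ : ℕ →₀ ℕ} {S : Finset ℕ} {m : ℕ}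
    (hmin : ∀ i ∈ γ.support, m ≤ i) (hS : insert m S ⊆ γ.support) (hmS : m ∉ S) :
    signedWeight q γ (insert m S) = -signedWeight q γ S := by
  set β := γ - oneOn (insert m S)
  have hγ : γ - oneOn S = Finsupp.single m 1 + β := by
    have h : β + (Finsupp.single m 1 + oneOn S) = γ := by
      rw [← oneOn_insert hmS]
      exact tsub_add_cancel_of_le (oneOn_le_iff.mpr hS)
    calc γ - oneOn S = β + Finsupp.single m 1 + oneOn S - oneOn S := by rw [add_assoc, h]
      _ = Finsupp.single m 1 + β := by rw [add_tsub_cancel_right, add_comm]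
  have hβ : ∀ i ∈ β.support, m ≤ i := fun i hi => hmin i (Finsupp.support_tsub hi)
  have hmS_lt : ∀ j ∈ S, m < j := fun j hj =>
    (hmin j (hS (mem_insert_of_mem hj))).lt_of_ne fun h => hmS (h ▸ hj)
  have hθ : thetaExp (oneOn S) (γ - oneOn S) = #S + thetaExp (oneOn (insert m S)) β := by
    rw [hγ, thetaExp_add_right, thetaExp_oneOn_single hmS_lt, oneOn_insert hmS,
      thetaExp_add_left, thetaExp_single_left_eq_zero hβ, zero_add]
  have hchoose : (#S + 1).choose 2 = (#S).choose 2 + #S := by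
    simpa [add_comm] using Nat.choose_succ_succ' #S 1
  rw [signedWeight, signedWeight, card_insert_of_notMem hmS, hchoose, hθ]
  ring

lemma sum_powerset_signedWeight (q : R) {γ : ℕ →₀ ℕ} (hγ : γ ≠ 0) :
    ∑ S ∈ γ.support.powerset, signedWeight q γ S = 0 := by
  obtain ⟨m, hm, hmin⟩ : ∃ m ∈ γ.support, ∀ i ∈ γ.support, m ≤ i :=
    ⟨_, min'_mem _ (Finsupp.support_nonempty_iff.mpr hγ), fun i hi => min'_le _ i hi⟩
  rw [← insert_erase hm, sum_powerset_insert (notMem_erase m _), ← sum_add_distrib]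
  refine sum_eq_zero fun S hS => ?_
  have hS' := mem_powerset.mp hS
  rw [signedWeight_insert_of_le q hmin (insert_subset hm (hS'.trans (erase_subset _ _)))
    (notMem_mono hS' (notMem_erase m _)), add_neg_cancel]

theorem eh_relation_general (q : R) (n : ℕ) (hn : 0 < n) (γ : ℕ →₀ ℕ) :
    ∑ k ∈ Finset.range (n + 1),
      (-1 : R) ^ k * q ^ (k * (k - 1) / 2) * mulW q (eW k) (hW (n - k)) γ = 0 := by
  have hsum : ∀ k ∈ range (n + 1), k + (n - k) = n := fun k hk =>
    Nat.add_sub_cancel' (mem_range_succ_iff.mp hk)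
  rw [sum_congr rfl fun k hk => by rw [mulW_eW_hW, hsum k hk]]
  by_cases hγ : degree γ = n
  · have hγ0 : γ ≠ 0 := by
      rintro rfl
      simp only [map_zero] at hγ
      omega
    calc _ = ∑ k ∈ range (n + 1), ∑ S ∈ γ.support.powersetCard k, signedWeight q γ S := by
          refine sum_congr rfl fun k _ => ?_
          rw [Finset.mul_sum]
          refine sum_congr rfl fun S hS => ?_
          obtain ⟨-, rfl⟩ := mem_powersetCard.mp hS
          rw [hW_apply, if_pos hγ, signedWeight, Nat.choose_two_right]
          ring
      _ = ∑ S ∈ γ.support.powerset, signedWeight q γ S :=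
          sum_range_sum_powersetCard (hγ ▸ card_support_le_degree γ) _
      _ = 0 := sum_powerset_signedWeight q hγ0
  · exact sum_eq_zero fun k _ => by simp [hW_apply, hγ]

/-- In `A_q`, `Σ_{k=0}^n (-1)^k q^{k(k-1)/2} e_k h_{n-k} = 0` for all `n ≥ 1`
(with `h₀ = e₀ = 1`). -/
theorem eh_relation (q : R) (hq : IsUnit q) (n : ℕ) (hn : 0 < n) (γ : ℕ →₀ ℕ) :
    ∑ k ∈ Finset.range (n + 1),
      (-1 : R) ^ k * q ^ (k * (k - 1) / 2) * mulW q (eW k) (hW (n - k)) γ = 0 :=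
  eh_relation_general q n hn γ
end

section
/- The map θ_q : k𝔖 → k𝔖 defined by θ_q(w) = q^{ℓ(w)} w^{-1} satisfies θ_q(w * w') = θ_q(w) *'_q θ_q(w') for all permutations w, w', where * is the Malvenuto–Reutenauer product (sum over all words u v with alph(u) ∪ alph(v) = [p+q], st(u) = w, st(v) = w') and *'_q is the q-shifted-shuffle product w *'_q w' = w ⧢_q \bar{w'}. -/
/-- A word is a permutation of `[n]` in one-line notation. -/
def isPermWord (w : List ℕ) : Prop := w.Perm ((List.range w.length).map (· + 1))

/-- The standardization `st(w)` of a word: the unique permutation word with the same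
relative order, ties broken left-to-right. -/
def stWord (w : List ℕ) : List ℕ :=
  (List.range w.length).map (fun i =>
    1 + ((List.range w.length).filter (fun j =>
      w.getD j 0 < w.getD i 0 ∨ (w.getD j 0 = w.getD i 0 ∧ j < i))).length)

/-- The list of all permutation words of `[n]`. -/
def permsOf (n : ℕ) : List (List ℕ) := ((List.range n).map (· + 1)).permutations

/-- The inversion number `ℓ(w)` of a word. -/
def invCount (w : List ℕ) : ℕ :=
  (((Finset.range w.length) ×ˢ (Finset.range w.length)).filter
    (fun p => p.1 < p.2 ∧ w.getD p.2 0 < w.getD p.1 0)).card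

/-- The inverse permutation word. -/
def invWord (w : List ℕ) : List ℕ := (List.range w.length).map (fun i => w.idxOf (i + 1) + 1)

variable {R : Type*} [CommRing R]

/-- The Malvenuto–Reutenauer product `w * w' = Σ u v`, summed over all words `u, v` with
`alph(u) ∪ alph(v) = [p+q]`, `st(u) = w` and `st(v) = w'`; equivalently the sum of all
permutation words `z` of `[p+q]` with `st(z₁⋯z_p) = w` and `st(z_{p+1}⋯z_{p+q}) = w'`. -/
noncomputable def mulMR (w w' : List ℕ) : List ℕ →₀ R :=
  (((permsOf (w.length + w'.length)).filter (fun z =>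
      stWord (z.take w.length) = w ∧ stWord (z.drop w.length) = w')).map
    (fun z => Finsupp.single z (1 : R))).sum

/-- Hoffman's `q`-shuffle of words: each interleaving is weighted by `q` to the number
of crossings. -/
noncomputable def qshuf (q : R) : List ℕ → List ℕ → (List ℕ →₀ R)
  | [], v => Finsupp.single v 1
  | u, [] => Finsupp.single u 1
  | a :: u, b :: v =>
      Finsupp.mapDomain (a :: ·) (qshuf q u (b :: v))
      + q ^ (u.length + 1) • Finsupp.mapDomain (b :: ·) (qshuf q (a :: u) v)
  termination_by u v => u.length + v.length

/-- The `q`-shifted-shuffle product `w *'_q w' = w ⧢_q \bar{w'}`, where `\bar{w'}`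
shifts all letters of `w'` by `|w|`. -/
noncomputable def shiftShufQ (q : R) (w w' : List ℕ) : List ℕ →₀ R :=
  qshuf q w (w'.map (· + w.length))

/-!
Passing to inverses turns the condition `st(z₁⋯z_p) = w`, `st(z_{p+1}⋯z_{p+r}) = w'` on a
permutation `z` of `[p+r]` into: the letters `≤ p` of `z⁻¹` spell `w⁻¹` and its letters `> p`
spell `\bar{w'⁻¹}`, i.e. `z⁻¹` is a shuffle of `w⁻¹` and `\bar{w'⁻¹}`. An inversion of `z` lies
inside the first `p` positions (an inversion of `w`), inside the last `r` (an inversion of `w'`),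
or straddles them, and the straddling ones are exactly the crossings of the shuffle `z⁻¹`. Hence
`q^{ℓ(z)} = q^{ℓ(w)} q^{ℓ(w')} q^{cross(z⁻¹)}`, the weight of `z⁻¹` in `w⁻¹ ⧢_q \bar{w'⁻¹}`.
-/

namespace List

theorem getD_map_range {α : Type*} (f : ℕ → α) (d : α) {n i : ℕ} (h : i < n) :
    ((range n).map f).getD i d = f i := by
  simp [getD_eq_getElem?_getD, h]

theorem getD_take {α : Type*} (l : List α) (d : α) {p j : ℕ} (h : j < p) :
    (l.take p).getD j d = l.getD j d := by
  simp [getD_eq_getElem?_getD, h]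

theorem getD_drop {α : Type*} (l : List α) (d : α) (p j : ℕ) :
    (l.drop p).getD j d = l.getD (p + j) d := by
  simp [getD_eq_getElem?_getD]

theorem getD_mem {α : Type*} {l : List α} (d : α) {i : ℕ} (hi : i < l.length) :
    l.getD i d ∈ l := by
  rw [getD_eq_getElem _ _ hi]
  exact getElem_mem _

theorem getD_idxOf {α : Type*} [BEq α] [LawfulBEq α] {l : List α} (d : α) {a : α}
    (ha : a ∈ l) : l.getD (l.idxOf a) d = a := by
  rw [getD_eq_getElem _ _ (idxOf_lt_length_iff.mpr ha)]
  exact getElem_idxOf _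

theorem Nodup.idxOf_getD {α : Type*} [BEq α] [LawfulBEq α] {l : List α} (hl : l.Nodup)
    (d : α) {i : ℕ} (hi : i < l.length) : l.idxOf (l.getD i d) = i := by
  rw [getD_eq_getElem _ _ hi]
  exact hl.idxOf_getElem i hi

theorem Nodup.getD_inj {α : Type*} [BEq α] [LawfulBEq α] {l : List α} (hl : l.Nodup)
    (d : α) {i j : ℕ} (hi : i < l.length) (hj : j < l.length) (h : l.getD i d = l.getD j d) :
    i = j := by
  rw [← hl.idxOf_getD d hi, ← hl.idxOf_getD d hj, h]

theorem idxOf_range {n k : ℕ} (hk : k < n) : (range n).idxOf k = k := by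
  have := nodup_range.idxOf_getElem k (by simpa using hk)
  rwa [getElem_range] at this

theorem countP_range_eq_card (P : ℕ → Prop) [DecidablePred P] (n : ℕ) :
    (range n).countP (fun i => decide (P i)) = ((Finset.range n).filter P).card := by
  simp [Finset.card_def, Finset.range_val, Multiset.range, countP_eq_length_filter]

theorem length_filter_eq_sum (P : ℕ → Prop) [DecidablePred P] (l : List ℕ) :
    (l.filter (fun c => decide (P c))).length
      = ∑ j ∈ Finset.range l.length, if P (l.getD j 0) then 1 else 0 := by
  induction l with
  | nil => simp
  | cons c t ih =>
    rw [length_cons, Finset.sum_range_succ', filter_cons]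
    by_cases h : P c <;> simp [h, ih, Nat.add_comm]

theorem idxOf_map_of_injOn {α β : Type*} [BEq α] [LawfulBEq α] [BEq β] [LawfulBEq β]
    {f : α → β} {l : List α} (hf : ∀ x ∈ l, ∀ y ∈ l, f x = f y → x = y) {a : α} (ha : a ∈ l) :
    (l.map f).idxOf (f a) = l.idxOf a := by
  induction l with
  | nil => simp at ha
  | cons b t ih =>
    by_cases hab : a = b
    · subst hab; simp
    · have ha' : a ∈ t := (mem_cons.mp ha).resolve_left hab
      have hfab : f b ≠ f a := fun h => hab (hf a ha b mem_cons_self h.symm)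
      rw [map_cons, idxOf_cons_ne _ hfab, idxOf_cons_ne _ (Ne.symm hab),
        ih (fun x hx y hy => hf x (mem_cons_of_mem _ hx) y (mem_cons_of_mem _ hy)) ha']

theorem Pairwise.idxOf_eq_countP_lt {l : List ℕ} (hl : l.Pairwise (· < ·)) {a : ℕ}
    (ha : a ∈ l) : l.idxOf a = l.countP (· < a) := by
  induction l with
  | nil => simp at ha
  | cons b t ih =>
    rw [pairwise_cons] at hl
    by_cases hab : a = b
    · subst hab
      have : t.countP (· < a) = 0 :=
        countP_eq_zero.mpr fun x hx => by have := hl.1 x hx; simp; omega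
      simp [this]
    · have ha' : a ∈ t := (mem_cons.mp ha).resolve_left hab
      rw [idxOf_cons_ne _ (Ne.symm hab), countP_cons, ih hl.2 ha']
      simp [hl.1 a ha']

theorem map_sub_eq_iff {l l' : List ℕ} {p : ℕ} (hl : ∀ e ∈ l, p ≤ e) :
    l.map (· - p) = l' ↔ l = l'.map (· + p) := by
  constructor
  · rintro rfl
    rw [map_map]
    conv_lhs => rw [← map_id l]
    exact map_congr_left fun e he => by have := hl e he; simp; omega
  · rintro rfl
    simp [Function.comp_def]

theorem sum_map_single_apply_of_nodup {α M : Type*} [AddCommMonoid M] [DecidableEq α]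
    {l : List α} (hl : l.Nodup) (c : α → M) (a : α) :
    (l.map fun x => Finsupp.single x (c x)).sum a = if a ∈ l then c a else 0 := by
  induction l with
  | nil => simp
  | cons b t ih =>
    rw [nodup_cons] at hl
    rw [map_cons, sum_cons, Finsupp.add_apply, ih hl.2, Finsupp.single_apply]
    by_cases hab : b = a
    · subst hab; simp [hl.1]
    · simp [hab, Ne.symm hab]

end List

theorem invWord_length (z : List ℕ) : (invWord z).length = z.length := by simp [invWord]

theorem invWord_getD (z : List ℕ) {i : ℕ} (hi : i < z.length) :
    (invWord z).getD i 0 = z.idxOf (i + 1) + 1 :=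
  List.getD_map_range _ 0 hi

theorem one_le_of_mem_invWord {z : List ℕ} {e : ℕ} (he : e ∈ invWord z) : 1 ≤ e := by
  simp only [invWord, List.mem_map] at he
  obtain ⟨i, _, rfl⟩ := he
  omega

namespace isPermWord

variable {z : List ℕ}

theorem nodup (h : isPermWord z) : z.Nodup :=
  h.nodup_iff.mpr (List.nodup_range.map fun _ _ hab => by omega)

theorem mem_iff (h : isPermWord z) {m : ℕ} : m ∈ z ↔ 1 ≤ m ∧ m ≤ z.length := by
  rw [List.Perm.mem_iff h]
  simp only [List.mem_map, List.mem_range]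
  constructor
  · rintro ⟨i, hi, rfl⟩; omega
  · rintro ⟨h1, h2⟩; exact ⟨m - 1, by omega, by omega⟩

theorem of_nodup (hnd : z.Nodup) (hb : ∀ m ∈ z, 1 ≤ m ∧ m ≤ z.length) : isPermWord z := by
  have hsub : z ⊆ (List.range z.length).map (· + 1) := fun m hm => by
    simp only [List.mem_map, List.mem_range]
    exact ⟨m - 1, by have := hb m hm; omega, by have := hb m hm; omega⟩
  exact (hnd.subperm hsub).perm_of_length_le (by simp)

theorem getD_bounds (h : isPermWord z) {i : ℕ} (hi : i < z.length) :
    1 ≤ z.getD i 0 ∧ z.getD i 0 ≤ z.length :=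
  h.mem_iff.mp (List.getD_mem 0 hi)

theorem succ_mem (h : isPermWord z) {i : ℕ} (hi : i < z.length) : i + 1 ∈ z :=
  h.mem_iff.mpr ⟨by omega, by omega⟩

theorem idxOf_lt (h : isPermWord z) {i : ℕ} (hi : i < z.length) : z.idxOf (i + 1) < z.length :=
  List.idxOf_lt_length_iff.mpr (h.succ_mem hi)

theorem getD_idxOf_succ (h : isPermWord z) {i : ℕ} (hi : i < z.length) :
    z.getD (z.idxOf (i + 1)) 0 = i + 1 :=
  List.getD_idxOf 0 (h.succ_mem hi)

theorem idxOf_succ_inj (h : isPermWord z) {i j : ℕ} (hi : i < z.length) (hj : j < z.length)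
    (hij : z.idxOf (i + 1) = z.idxOf (j + 1)) : i = j := by
  have := congrArg (z.getD · 0) hij
  simp only [h.getD_idxOf_succ hi, h.getD_idxOf_succ hj] at this
  omega

theorem idxOf_getD_pred (h : isPermWord z) {i : ℕ} (hi : i < z.length) :
    z.idxOf (z.getD i 0 - 1 + 1) = i := by
  rw [Nat.sub_add_cancel (h.getD_bounds hi).1, h.nodup.idxOf_getD 0 hi]

theorem le_of_mem_invWord (h : isPermWord z) {e : ℕ} (he : e ∈ invWord z) : e ≤ z.length := by
  simp only [invWord, List.mem_map, List.mem_range] at he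
  obtain ⟨i, hi, rfl⟩ := he
  have := h.idxOf_lt hi
  omega

theorem invWord_injOn (h : isPermWord z) :
    ∀ x ∈ List.range z.length, ∀ y ∈ List.range z.length,
      z.idxOf (x + 1) + 1 = z.idxOf (y + 1) + 1 → x = y := by
  intro x hx y hy hxy
  exact h.idxOf_succ_inj (List.mem_range.mp hx) (List.mem_range.mp hy) (by omega)

protected theorem invWord (h : isPermWord z) : isPermWord (invWord z) :=
  of_nodup (List.nodup_range.map_on h.invWord_injOn) fun _ hm => by
    rw [invWord_length]
    exact ⟨one_le_of_mem_invWord hm, h.le_of_mem_invWord hm⟩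

theorem idxOf_invWord (h : isPermWord z) {i : ℕ} (hi : i < z.length) :
    (invWord z).idxOf (i + 1) = z.getD i 0 - 1 := by
  have hm := h.getD_bounds hi
  have hlt : z.getD i 0 - 1 < z.length := by omega
  have := List.idxOf_map_of_injOn h.invWord_injOn (List.mem_range.mpr hlt)
  rwa [h.idxOf_getD_pred hi, List.idxOf_range hlt] at this

theorem invWord_invWord (h : isPermWord z) : invWord (invWord z) = z := by
  apply List.ext_getElem (by rw [invWord_length, invWord_length])
  intro i h1 h2
  rw [← List.getD_eq_getElem _ 0 h1, ← List.getD_eq_getElem _ 0 h2,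
    invWord_getD _ (by rwa [invWord_length]), h.idxOf_invWord h2]
  have := (h.getD_bounds h2).1
  omega

theorem invWord_eq_iff (h : isPermWord z) {w : List ℕ} (hw : isPermWord w) :
    invWord z = w ↔ z = invWord w := by
  constructor
  · rintro rfl; exact h.invWord_invWord.symm
  · rintro rfl; exact hw.invWord_invWord

end isPermWord

theorem stWord_length (v : List ℕ) : (stWord v).length = v.length := by simp [stWord]

theorem stWord_getD_of_nodup {v : List ℕ} (hv : v.Nodup) {i : ℕ} (hi : i < v.length) :
    (stWord v).getD i 0
      = 1 + ((Finset.range v.length).filter (fun j => v.getD j 0 < v.getD i 0)).card := by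
  rw [stWord, List.getD_map_range _ 0 hi, ← List.countP_range_eq_card,
    List.countP_eq_length_filter]
  congr 2
  refine List.filter_congr fun j hj => ?_
  have hj := List.mem_range.mp hj
  simp only [decide_eq_decide, or_iff_left_iff_imp, and_imp]
  intro heq _
  exact absurd (hv.getD_inj 0 hj hi heq) (by omega)

theorem card_getD_lt_lt_of_getD_lt (v : List ℕ) {a b : ℕ} (ha : a < v.length)
    (hab : v.getD a 0 < v.getD b 0) :
    ((Finset.range v.length).filter (fun k => v.getD k 0 < v.getD a 0)).card
      < ((Finset.range v.length).filter (fun k => v.getD k 0 < v.getD b 0)).card := by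
  refine Finset.card_lt_card ⟨fun k hk => ?_, fun hsub => ?_⟩
  · simp only [Finset.mem_filter] at hk ⊢
    exact ⟨hk.1, hk.2.trans hab⟩
  · have := (Finset.mem_filter.mp (hsub (by simpa using ⟨ha, hab⟩))).2
    exact lt_irrefl _ this

theorem stWord_getD_lt_iff {v : List ℕ} (hv : v.Nodup) {i j : ℕ} (hi : i < v.length)
    (hj : j < v.length) : (stWord v).getD j 0 < (stWord v).getD i 0 ↔ v.getD j 0 < v.getD i 0 := by
  rw [stWord_getD_of_nodup hv hi, stWord_getD_of_nodup hv hj]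
  constructor
  · intro hlt
    rcases lt_trichotomy (v.getD j 0) (v.getD i 0) with h | h | h
    · exact h
    · rw [hv.getD_inj 0 hj hi h] at hlt; omega
    · have := card_getD_lt_lt_of_getD_lt v hi h; omega
  · intro h
    have := card_getD_lt_lt_of_getD_lt v hj h
    omega

theorem invCount_stWord {v : List ℕ} (hv : v.Nodup) : invCount (stWord v) = invCount v := by
  rw [invCount, invCount, stWord_length]
  congr 1
  refine Finset.filter_congr fun x hx => ?_
  simp only [Finset.mem_product, Finset.mem_range] at hx
  exact and_congr Iff.rfl (stWord_getD_lt_iff hv hx.1 hx.2)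

theorem List.idxOf_map_filter_range {f : ℕ → ℕ} {Q : ℕ → Prop} [DecidablePred Q] {n x : ℕ}
    (hf : ∀ y < n, ∀ y' < n, Q y → Q y' → f y = f y' → y = y') (hx : x < n) (hQx : Q x) :
    (((List.range n).filter (fun y => Q y)).map f).idxOf (f x)
      = ((Finset.range n).filter (fun y => y < x ∧ Q y)).card := by
  have hmem : x ∈ (List.range n).filter (fun y => Q y) := by simp [hx, hQx]
  rw [List.idxOf_map_of_injOn (fun y hy y' hy' => by
      simp only [List.mem_filter, List.mem_range, decide_eq_true_eq] at hy hy'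
      exact hf y hy.1 y' hy'.1 hy.2 hy'.2) hmem,
    (List.pairwise_lt_range.sublist List.filter_sublist).idxOf_eq_countP_lt hmem,
    List.countP_filter]
  simpa only [Bool.decide_and] using List.countP_range_eq_card (fun y => y < x ∧ Q y) n

def invSlice (z : List ℕ) (a k : ℕ) : List ℕ :=
  ((invWord z).filter (fun e => a < e ∧ e ≤ a + k)).map (· - a)

section invSlice

variable {z : List ℕ} {a k : ℕ}

theorem length_invSlice (hz : isPermWord z) (hak : a + k ≤ z.length) :
    (invSlice z a k).length = k := by
  have hperm : (invWord z).Perm ((List.range z.length).map (· + 1)) := by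
    simpa [isPermWord, invWord_length] using hz.invWord
  rw [invSlice, List.length_map, ← List.countP_eq_length_filter, hperm.countP_eq,
    List.countP_map]
  change (List.range z.length).countP (fun j => decide (a < j + 1 ∧ j + 1 ≤ a + k)) = k
  rw [List.countP_range_eq_card]
  have : (Finset.range z.length).filter (fun j => a < j + 1 ∧ j + 1 ≤ a + k)
      = Finset.Ico a (a + k) := by
    ext j
    simp only [Finset.mem_filter, Finset.mem_range, Finset.mem_Ico]
    omega
  rw [this, Nat.card_Ico]
  omega

theorem isPermWord_invSlice (hz : isPermWord z) (hak : a + k ≤ z.length) :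
    isPermWord (invSlice z a k) := by
  have hbounds : ∀ e ∈ (invWord z).filter (fun e => a < e ∧ e ≤ a + k), a < e ∧ e ≤ a + k :=
    fun e he => by simpa using (List.mem_filter.mp he).2
  refine .of_nodup ((List.filter_sublist.nodup hz.invWord.nodup).map_on fun x hx y hy hxy => ?_)
    fun m hm => ?_
  · have := hbounds x hx
    have := hbounds y hy
    omega
  · rw [length_invSlice hz hak]
    obtain ⟨e, he, rfl⟩ := List.mem_map.mp hm
    have := hbounds e he
    omega

theorem invSlice_eq_map_filter_range (z : List ℕ) (a k : ℕ) :
    invSlice z a k = ((List.range z.length).filter (fun y =>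
        a < z.idxOf (y + 1) + 1 ∧ z.idxOf (y + 1) + 1 ≤ a + k)).map
      (fun y => z.idxOf (y + 1) + 1 - a) := by
  simp only [invSlice, invWord, List.filter_map, List.map_map]
  rfl

theorem card_values_lt_in_slice (hz : isPermWord z) (hak : a + k ≤ z.length) {m : ℕ} :
    ((Finset.range z.length).filter (fun y =>
        y < m - 1 ∧ a < z.idxOf (y + 1) + 1 ∧ z.idxOf (y + 1) + 1 ≤ a + k)).card
      = ((Finset.range k).filter (fun j => z.getD (a + j) 0 < m)).card := by
  refine Finset.card_bij' (fun y _ => z.idxOf (y + 1) - a) (fun j _ => z.getD (a + j) 0 - 1)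
    (fun y hy => ?_) (fun j hj => ?_) (fun y hy => ?_) (fun j hj => ?_)
  · simp only [Finset.mem_filter, Finset.mem_range] at hy ⊢
    rw [Nat.add_sub_cancel' (by omega), hz.getD_idxOf_succ hy.1]
    omega
  · simp only [Finset.mem_filter, Finset.mem_range] at hj ⊢
    have := hz.getD_bounds (show a + j < z.length by omega)
    rw [hz.idxOf_getD_pred (by omega)]
    omega
  · simp only [Finset.mem_filter, Finset.mem_range] at hy
    rw [Nat.add_sub_cancel' (by omega), hz.getD_idxOf_succ hy.1]
    omega
  · simp only [Finset.mem_filter, Finset.mem_range] at hj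
    rw [hz.idxOf_getD_pred (by omega)]
    omega

theorem idxOf_invSlice (hz : isPermWord z) (hak : a + k ≤ z.length) {i : ℕ} (hi : i < k) :
    (invSlice z a k).idxOf (i + 1)
      = ((Finset.range k).filter (fun j => z.getD (a + j) 0 < z.getD (a + i) 0)).card := by
  have hm := hz.getD_bounds (show a + i < z.length by omega)
  have hval : z.idxOf (z.getD (a + i) 0 - 1 + 1) + 1 - a = i + 1 := by
    rw [hz.idxOf_getD_pred (by omega)]
    omega
  rw [← card_values_lt_in_slice hz hak, invSlice_eq_map_filter_range, ← hval]
  refine List.idxOf_map_filter_range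
    (f := fun y => z.idxOf (y + 1) + 1 - a) (x := z.getD (a + i) 0 - 1)
    (Q := fun y => a < z.idxOf (y + 1) + 1 ∧ z.idxOf (y + 1) + 1 ≤ a + k)
    (fun y hy y' hy' hQ hQ' h => hz.idxOf_succ_inj hy hy' (by omega)) (by omega) ?_
  · rw [hz.idxOf_getD_pred (by omega)]
    omega

theorem stWord_slice (hz : isPermWord z) (hak : a + k ≤ z.length) :
    stWord ((z.drop a).take k) = invWord (invSlice z a k) := by
  have hlen : ((z.drop a).take k).length = k := by simp; omega
  have hgetD : ∀ j < k, ((z.drop a).take k).getD j 0 = z.getD (a + j) 0 := fun j hj => by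
    rw [List.getD_take _ _ hj, List.getD_drop]
  have hnd : ((z.drop a).take k).Nodup :=
    ((List.take_sublist _ _).trans (List.drop_sublist _ _)).nodup hz.nodup
  apply List.ext_getElem (by rw [stWord_length, invWord_length, length_invSlice hz hak, hlen])
  intro i h1 h2
  have hi : i < k := by rwa [stWord_length, hlen] at h1
  rw [← List.getD_eq_getElem _ 0 h1, ← List.getD_eq_getElem _ 0 h2,
    stWord_getD_of_nodup hnd (by rwa [hlen]), invWord_getD _ (by rwa [length_invSlice hz hak]),
    idxOf_invSlice hz hak hi, hlen, add_comm]
  congr 2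
  exact Finset.filter_congr fun j hj => by
    rw [hgetD j (Finset.mem_range.mp hj), hgetD i hi]

end invSlice

section TakeDrop

variable {z : List ℕ} {p : ℕ}

theorem invSlice_zero (z : List ℕ) (p : ℕ) : invSlice z 0 p = (invWord z).filter (· ≤ p) := by
  simp only [invSlice, Nat.sub_zero, List.map_id']
  refine List.filter_congr fun e he => ?_
  have := one_le_of_mem_invWord he
  simp only [decide_eq_decide]
  omega

theorem invSlice_sub_length (hz : isPermWord z) :
    invSlice z p (z.length - p) = ((invWord z).filter (p < ·)).map (· - p) := by
  rw [invSlice, List.filter_congr]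
  intro e he
  have := hz.le_of_mem_invWord he
  simp only [decide_eq_decide]
  omega

theorem stWord_take (hz : isPermWord z) (hp : p ≤ z.length) :
    stWord (z.take p) = invWord ((invWord z).filter (· ≤ p)) := by
  simpa [invSlice_zero] using stWord_slice hz (a := 0) (k := p) (by omega)

theorem stWord_drop (hz : isPermWord z) (hp : p ≤ z.length) :
    stWord (z.drop p) = invWord (((invWord z).filter (p < ·)).map (· - p)) := by
  rw [← invSlice_sub_length hz, ← stWord_slice hz (by omega), List.take_of_length_le (by simp)]

theorem isPermWord_filter_le (hz : isPermWord z) (hp : p ≤ z.length) :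
    isPermWord ((invWord z).filter (· ≤ p)) := by
  simpa [invSlice_zero] using isPermWord_invSlice hz (a := 0) (k := p) (by omega)

theorem isPermWord_filter_gt (hz : isPermWord z) (hp : p ≤ z.length) :
    isPermWord (((invWord z).filter (p < ·)).map (· - p)) := by
  rw [← invSlice_sub_length hz]
  exact isPermWord_invSlice hz (by omega)

theorem stWord_take_drop_eq_iff (hz : isPermWord z) (hp : p ≤ z.length) {w w' : List ℕ}
    (hw : isPermWord w) (hw' : isPermWord w') :
    stWord (z.take p) = w ∧ stWord (z.drop p) = w' ↔
      (invWord z).filter (· ≤ p) = invWord w ∧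
        (invWord z).filter (p < ·) = (invWord w').map (· + p) := by
  rw [stWord_take hz hp, stWord_drop hz hp, (isPermWord_filter_le hz hp).invWord_eq_iff hw,
    (isPermWord_filter_gt hz hp).invWord_eq_iff hw', List.map_sub_eq_iff]
  intro e he
  exact (of_decide_eq_true (List.mem_filter.mp he).2).le

end TakeDrop

theorem isPermWord_of_filter {y u v : List ℕ} {p : ℕ} (hu : isPermWord u) (hv : isPermWord v)
    (hpu : u.length = p) (hyu : y.filter (· ≤ p) = u) (hyv : y.filter (p < ·) = v.map (· + p)) :
    isPermWord y ∧ y.length = p + v.length := by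
  have hsplit : (u ++ v.map (· + p)).Perm y := by
    rw [← hyu, ← hyv]
    convert List.filter_append_perm (· ≤ p) y using 3
    funext x
    rw [← decide_not]
    simp only [decide_eq_decide]
    omega
  have hperm : y.Perm ((List.range (p + v.length)).map (· + 1)) := by
    refine hsplit.symm.trans ?_
    rw [List.range_add, List.map_append, List.map_map, ← hpu]
    refine List.Perm.append hu ((hv.map (· + u.length)).trans (.of_eq ?_))
    simp only [List.map_map]
    exact List.map_congr_left fun _ _ => by simp; omega
  have hlen : y.length = p + v.length := by simpa using hperm.length_eq
  exact ⟨by rwa [isPermWord, hlen], hlen⟩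

theorem card_filter_pairs_cons (r : ℕ → ℕ → Prop) [DecidableRel r] (c : ℕ) (t : List ℕ) :
    ((Finset.range (t.length + 1) ×ˢ Finset.range (t.length + 1)).filter
        fun x => x.1 < x.2 ∧ r ((c :: t).getD x.1 0) ((c :: t).getD x.2 0)).card
      = (t.filter fun e => r c e).length + ((Finset.range t.length ×ˢ Finset.range t.length).filter
        fun x => x.1 < x.2 ∧ r (t.getD x.1 0) (t.getD x.2 0)).card := by
  simp only [Finset.card_filter, Finset.sum_product]
  rw [Finset.sum_range_succ', add_comm, List.length_filter_eq_sum]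
  congr 1
  · rw [Finset.sum_range_succ']
    simp
  · refine Finset.sum_congr rfl fun i _ => ?_
    rw [Finset.sum_range_succ']
    simp

/-- The number of crossings of `y` as a shuffle of its letters `≤ p` with its letters `> p`,
i.e. the exponent of `q` that `y` carries in Hoffman's `q`-shuffle. -/
def crossNum (p : ℕ) : List ℕ → ℕ
  | [] => 0
  | c :: t => (if c ≤ p then 0 else (t.filter (· ≤ p)).length) + crossNum p t

theorem crossNum_eq_card (p : ℕ) (y : List ℕ) :
    crossNum p y = ((Finset.range y.length ×ˢ Finset.range y.length).filter
      fun x => x.1 < x.2 ∧ p < y.getD x.1 0 ∧ y.getD x.2 0 ≤ p).card := by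
  induction y with
  | nil => rfl
  | cons c t ih =>
    rw [crossNum, ih, List.length_cons, card_filter_pairs_cons (fun a b => p < a ∧ b ≤ p)]
    by_cases hc : c ≤ p
    · simp [hc, Nat.not_lt.mpr hc]
    · simp [hc, Nat.lt_of_not_le hc]

theorem crossNum_of_forall_gt {p : ℕ} {y : List ℕ} (h : ∀ c ∈ y, p < c) : crossNum p y = 0 := by
  rw [crossNum_eq_card, Finset.card_eq_zero, Finset.filter_eq_empty_iff]
  intro x hx hcross
  have := h _ (List.getD_mem 0 (Finset.mem_range.mp (Finset.mem_product.mp hx).2))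
  omega

theorem crossNum_of_forall_le {p : ℕ} {y : List ℕ} (h : ∀ c ∈ y, c ≤ p) : crossNum p y = 0 := by
  rw [crossNum_eq_card, Finset.card_eq_zero, Finset.filter_eq_empty_iff]
  intro x hx hcross
  have := h _ (List.getD_mem 0 (Finset.mem_range.mp (Finset.mem_product.mp hx).1))
  omega

def inversions (z : List ℕ) : Finset (ℕ × ℕ) :=
  (Finset.range z.length ×ˢ Finset.range z.length).filter
    fun x => x.1 < x.2 ∧ z.getD x.2 0 < z.getD x.1 0

theorem invCount_eq_card_inversions (z : List ℕ) : invCount z = (inversions z).card := rfl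

section InversionSplit

variable {z : List ℕ} {p : ℕ}

theorem card_inversions_filter_lt (hp : p ≤ z.length) :
    ((inversions z).filter (·.2 < p)).card = invCount (z.take p) := by
  refine Finset.card_bij' (fun x _ => x) (fun x _ => x) (fun x hx => ?_) (fun x hx => ?_)
    (fun _ _ => rfl) (fun _ _ => rfl)
  · simp only [inversions, Finset.mem_filter, Finset.mem_product, Finset.mem_range] at hx ⊢
    rw [List.length_take, min_eq_left hp, List.getD_take _ _ hx.2,
      List.getD_take _ _ (show x.1 < p by omega)]
    omega
  · simp only [inversions, Finset.mem_filter, Finset.mem_product, Finset.mem_range,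
      List.length_take, min_eq_left hp] at hx ⊢
    rw [List.getD_take _ _ hx.1.2, List.getD_take _ _ hx.1.1] at hx
    omega

theorem card_inversions_filter_ge :
    ((inversions z).filter (p ≤ ·.1)).card = invCount (z.drop p) := by
  refine Finset.card_bij' (fun x _ => (x.1 - p, x.2 - p)) (fun x _ => (x.1 + p, x.2 + p))
    (fun x hx => ?_) (fun x hx => ?_) (fun x hx => ?_) (fun x _ => by simp)
  · simp only [inversions, Finset.mem_filter, Finset.mem_product, Finset.mem_range,
      List.length_drop, List.getD_drop] at hx ⊢
    rw [Nat.add_sub_cancel' hx.2, Nat.add_sub_cancel' (by omega)]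
    omega
  · simp only [inversions, Finset.mem_filter, Finset.mem_product, Finset.mem_range,
      List.length_drop, List.getD_drop] at hx ⊢
    rw [add_comm x.1, add_comm x.2]
    omega
  · simp only [inversions, Finset.mem_filter] at hx
    ext <;> simp <;> omega

/-- For a straddling inversion `(i, j)`, i.e. `i < p ≤ j` and `z_j < z_i`, the letter `j + 1 > p`
precedes the letter `i + 1 ≤ p` in `z⁻¹`: a crossing of `z⁻¹`. -/
theorem card_inversions_filter_straddle (hz : isPermWord z) :
    ((inversions z).filter fun x => x.1 < p ∧ p ≤ x.2).card = crossNum p (invWord z) := by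
  rw [crossNum_eq_card, invWord_length]
  refine Finset.card_bij' (fun x _ => (z.getD x.2 0 - 1, z.getD x.1 0 - 1))
    (fun x _ => (z.idxOf (x.2 + 1), z.idxOf (x.1 + 1))) (fun x hx => ?_) (fun x hx => ?_)
    (fun x hx => ?_) (fun x hx => ?_)
  · simp only [inversions, Finset.mem_filter, Finset.mem_product, Finset.mem_range] at hx ⊢
    have := hz.getD_bounds hx.1.1.1
    have := hz.getD_bounds hx.1.1.2
    rw [invWord_getD _ (by omega), invWord_getD _ (by omega), hz.idxOf_getD_pred hx.1.1.1,
      hz.idxOf_getD_pred hx.1.1.2]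
    omega
  · simp only [inversions, Finset.mem_filter, Finset.mem_product, Finset.mem_range] at hx ⊢
    rw [invWord_getD _ hx.1.1, invWord_getD _ hx.1.2] at hx
    rw [hz.getD_idxOf_succ hx.1.1, hz.getD_idxOf_succ hx.1.2]
    have := hz.idxOf_lt hx.1.1
    have := hz.idxOf_lt hx.1.2
    omega
  · simp only [inversions, Finset.mem_filter, Finset.mem_product, Finset.mem_range] at hx
    simp only [hz.idxOf_getD_pred hx.1.1.1, hz.idxOf_getD_pred hx.1.1.2]
  · simp only [Finset.mem_filter, Finset.mem_product, Finset.mem_range] at hx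
    simp only [hz.getD_idxOf_succ hx.1.1, hz.getD_idxOf_succ hx.1.2, Nat.add_sub_cancel]

theorem invCount_eq_take_add_drop_add_crossNum (hz : isPermWord z) (hp : p ≤ z.length) :
    invCount z = invCount (z.take p) + invCount (z.drop p) + crossNum p (invWord z) := by
  rw [← card_inversions_filter_lt hp, ← card_inversions_filter_ge,
    ← card_inversions_filter_straddle hz, invCount_eq_card_inversions,
    ← Finset.card_filter_add_card_filter_not (s := inversions z) (·.2 < p),
    ← Finset.card_filter_add_card_filter_not (s := (inversions z).filter (¬ ·.2 < p)) (p ≤ ·.1),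
    Finset.filter_filter, Finset.filter_filter, add_assoc]
  congr 3 <;> refine Finset.filter_congr fun x hx => ?_
  · have := (Finset.mem_filter.mp hx).2.1
    omega
  · omega

end InversionSplit

section QShuffle

theorem Finsupp.mapDomain_cons_apply {M : Type*} [AddCommMonoid M] (a c : ℕ) (F : List ℕ →₀ M)
    (t : List ℕ) : Finsupp.mapDomain (a :: ·) F (c :: t) = if a = c then F t else 0 := by
  split_ifs with h
  · subst h
    exact Finsupp.mapDomain_apply List.cons_injective F t
  · exact Finsupp.mapDomain_of_notMem_range _ _ fun ⟨t', ht'⟩ => h (List.cons.inj ht').1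

theorem Finsupp.mapDomain_cons_apply_nil {M : Type*} [AddCommMonoid M] (a : ℕ)
    (F : List ℕ →₀ M) : Finsupp.mapDomain (a :: ·) F [] = 0 :=
  Finsupp.mapDomain_of_notMem_range _ _ fun ⟨_, h⟩ => List.cons_ne_nil _ _ h

variable {p : ℕ} {y : List ℕ}

theorem filter_le_eq_nil_and_filter_gt_eq_iff {v : List ℕ} (hv : ∀ x ∈ v, p < x) :
    y.filter (· ≤ p) = [] ∧ y.filter (p < ·) = v ↔ y = v := by
  constructor
  · rintro ⟨hle, hgt⟩
    rw [← hgt, eq_comm, List.filter_eq_self]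
    intro c hc
    have := List.filter_eq_nil_iff.mp hle c hc
    simp only [decide_eq_true_eq] at this ⊢
    omega
  · rintro rfl
    refine ⟨List.filter_eq_nil_iff.mpr fun c hc => ?_, List.filter_eq_self.mpr fun c hc => ?_⟩
    all_goals have := hv c hc; simp only [decide_eq_true_eq]; omega

theorem filter_le_eq_and_filter_gt_eq_nil_iff {u : List ℕ} (hu : ∀ x ∈ u, x ≤ p) :
    y.filter (· ≤ p) = u ∧ y.filter (p < ·) = [] ↔ y = u := by
  constructor
  · rintro ⟨hle, hgt⟩
    rw [← hle, eq_comm, List.filter_eq_self]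
    intro c hc
    have := List.filter_eq_nil_iff.mp hgt c hc
    simp only [decide_eq_true_eq] at this ⊢
    omega
  · rintro rfl
    refine ⟨List.filter_eq_self.mpr fun c hc => ?_, List.filter_eq_nil_iff.mpr fun c hc => ?_⟩
    all_goals have := hu c hc; simp only [decide_eq_true_eq]; omega

variable (q : R)

theorem qshuf_cons_cons_apply_of_le {a b c : ℕ} {u v t : List ℕ} (hb : p < b) (hc : c ≤ p) :
    qshuf q (a :: u) (b :: v) (c :: t) = if a = c then qshuf q u (b :: v) t else 0 := by
  rw [qshuf.eq_3, Finsupp.add_apply, Finsupp.smul_apply, Finsupp.mapDomain_cons_apply a c,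
    Finsupp.mapDomain_cons_apply b c, if_neg (show b ≠ c by omega), smul_zero, add_zero]

theorem qshuf_cons_cons_apply_of_gt {a b c : ℕ} {u v t : List ℕ} (ha : a ≤ p) (hc : p < c) :
    qshuf q (a :: u) (b :: v) (c :: t)
      = q ^ (u.length + 1) * if b = c then qshuf q (a :: u) v t else 0 := by
  rw [qshuf.eq_3, Finsupp.add_apply, Finsupp.smul_apply, Finsupp.mapDomain_cons_apply a c,
    Finsupp.mapDomain_cons_apply b c, if_neg (show a ≠ c by omega), zero_add, smul_eq_mul]

theorem qshuf_nil_apply {v : List ℕ} (hv : ∀ x ∈ v, p < x) (y : List ℕ) :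
    qshuf q [] v y =
      if y.filter (· ≤ p) = [] ∧ y.filter (p < ·) = v then q ^ crossNum p y else 0 := by
  rw [qshuf.eq_1, Finsupp.single_apply]
  by_cases h : y = v
  · subst h
    rw [if_pos rfl, if_pos ((filter_le_eq_nil_and_filter_gt_eq_iff hv).mpr rfl),
      crossNum_of_forall_gt hv, pow_zero]
  · rw [if_neg (Ne.symm h), if_neg (mt (filter_le_eq_nil_and_filter_gt_eq_iff hv).mp h)]

theorem qshuf_nil_right_apply {u : List ℕ} (hne : u ≠ []) (hu : ∀ x ∈ u, x ≤ p) (y : List ℕ) :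
    qshuf q u [] y =
      if y.filter (· ≤ p) = u ∧ y.filter (p < ·) = [] then q ^ crossNum p y else 0 := by
  rw [qshuf.eq_2 _ _ hne, Finsupp.single_apply]
  by_cases h : y = u
  · subst h
    rw [if_pos rfl, if_pos ((filter_le_eq_and_filter_gt_eq_nil_iff hu).mpr rfl),
      crossNum_of_forall_le hu, pow_zero]
  · rw [if_neg (Ne.symm h), if_neg (mt (filter_le_eq_and_filter_gt_eq_nil_iff hu).mp h)]

theorem qshuf_apply_of_separated {u v : List ℕ} (hu : ∀ x ∈ u, x ≤ p) (hv : ∀ x ∈ v, p < x)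
    (y : List ℕ) : qshuf q u v y =
      if y.filter (· ≤ p) = u ∧ y.filter (p < ·) = v then q ^ crossNum p y else 0 := by
  induction u, v using qshuf.induct generalizing y with
  | case1 v => exact qshuf_nil_apply q hv y
  | case2 u hne => exact qshuf_nil_right_apply q hne hu y
  | case3 a u b v ih₁ ih₂ =>
    have ha := hu a List.mem_cons_self
    have hb := hv b List.mem_cons_self
    cases y with
    | nil => simp [qshuf.eq_3, Finsupp.mapDomain_cons_apply_nil]
    | cons c t =>
      by_cases hc : c ≤ p
      · rw [qshuf_cons_cons_apply_of_le q hb hc, crossNum, if_pos hc, zero_add,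
          List.filter_cons_of_pos (p := (· ≤ p)) (by simpa using hc),
          List.filter_cons_of_neg (p := (p < ·)) (by simpa using hc)]
        by_cases hac : a = c
        · subst hac
          rw [if_pos rfl, ih₁ (fun x hx => hu x (List.mem_cons_of_mem _ hx)) hv t]
          simp only [List.cons.injEq, true_and]
        · rw [if_neg hac, if_neg]
          rintro ⟨h, -⟩
          exact hac (List.cons.inj h).1.symm
      · rw [qshuf_cons_cons_apply_of_gt q ha (Nat.lt_of_not_le hc), crossNum, if_neg hc,
          List.filter_cons_of_neg (p := (· ≤ p)) (by simpa using hc),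
          List.filter_cons_of_pos (p := (p < ·)) (by simpa using hc)]
        by_cases hbc : b = c
        · subst hbc
          rw [if_pos rfl, ih₂ hu (fun x hx => hv x (List.mem_cons_of_mem _ hx)) t]
          simp only [List.cons.injEq, true_and]
          split_ifs with h
          · rw [h.1, List.length_cons, ← pow_add]
          · rw [mul_zero]
        · rw [if_neg hbc, mul_zero, if_neg]
          rintro ⟨-, h⟩
          exact hbc (List.cons.inj h).1.symm

end QShuffle

theorem mem_permsOf_iff {n : ℕ} {z : List ℕ} : z ∈ permsOf n ↔ isPermWord z ∧ z.length = n := by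
  rw [permsOf, List.mem_permutations]
  constructor
  · intro h
    have hlen : z.length = n := by simpa using h.length_eq
    exact ⟨by rwa [isPermWord, hlen], hlen⟩
  · rintro ⟨h, rfl⟩
    exact h

section MalvenutoReutenauer

def mrWords (w w' : List ℕ) : List (List ℕ) :=
  (permsOf (w.length + w'.length)).filter fun z =>
    stWord (z.take w.length) = w ∧ stWord (z.drop w.length) = w'

variable {w w' : List ℕ}

theorem mulMR_eq_sum_mrWords :
    mulMR (R := R) w w' = ((mrWords w w').map fun z => Finsupp.single z 1).sum := rfl

theorem nodup_mrWords : (mrWords w w').Nodup :=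
  (List.nodup_permutations _ (List.nodup_range.map fun _ _ h => by omega)).filter _

theorem mem_mrWords_iff {z : List ℕ} : z ∈ mrWords w w' ↔ isPermWord z ∧
    z.length = w.length + w'.length ∧ stWord (z.take w.length) = w ∧
      stWord (z.drop w.length) = w' := by
  simp only [mrWords, List.mem_filter, mem_permsOf_iff, decide_eq_true_eq, and_assoc]

theorem isPermWord_of_mem_mrWords {z : List ℕ} (hz : z ∈ mrWords w w') : isPermWord z :=
  (mem_mrWords_iff.mp hz).1

theorem nodup_map_invWord_mrWords : ((mrWords w w').map invWord).Nodup :=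
  nodup_mrWords.map_on fun x hx y hy h => by
    rw [← (isPermWord_of_mem_mrWords hx).invWord_invWord, h,
      (isPermWord_of_mem_mrWords hy).invWord_invWord]

theorem mem_map_invWord_mrWords_iff (hw : isPermWord w) (hw' : isPermWord w') {y : List ℕ} :
    y ∈ (mrWords w w').map invWord ↔ y.filter (· ≤ w.length) = invWord w ∧
      y.filter (w.length < ·) = (invWord w').map (· + w.length) := by
  constructor
  · intro hy
    obtain ⟨z, hz, rfl⟩ := List.mem_map.mp hy
    obtain ⟨hzw, hzl, hst⟩ := mem_mrWords_iff.mp hz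
    exact (stWord_take_drop_eq_iff hzw (by omega) hw hw').mp hst
  · intro h
    obtain ⟨hy, hyl⟩ := isPermWord_of_filter hw.invWord hw'.invWord (invWord_length w) h.1 h.2
    rw [invWord_length] at hyl
    refine List.mem_map.mpr ⟨invWord y, mem_mrWords_iff.mpr ⟨hy.invWord, ?_, ?_⟩,
      hy.invWord_invWord⟩
    · rw [invWord_length, hyl]
    · rw [stWord_take_drop_eq_iff hy.invWord (by rw [invWord_length]; omega) hw hw',
        hy.invWord_invWord]
      exact h

theorem invCount_invWord_of_filter (hw : isPermWord w) (hw' : isPermWord w') {y : List ℕ}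
    (h : y.filter (· ≤ w.length) = invWord w ∧
      y.filter (w.length < ·) = (invWord w').map (· + w.length)) :
    invCount (invWord y) = invCount w + invCount w' + crossNum w.length y := by
  obtain ⟨hy, hyl⟩ := isPermWord_of_filter hw.invWord hw'.invWord (invWord_length w) h.1 h.2
  have hp : w.length ≤ (invWord y).length := by rw [invWord_length]; omega
  have hst := (stWord_take_drop_eq_iff hy.invWord hp hw hw').mpr (by rwa [hy.invWord_invWord])
  have hnd := hy.invWord.nodup
  rw [invCount_eq_take_add_drop_add_crossNum hy.invWord hp, hy.invWord_invWord,
    ← invCount_stWord ((List.take_sublist _ _).nodup hnd),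
    ← invCount_stWord ((List.drop_sublist _ _).nodup hnd), hst.1, hst.2]

theorem sum_mulMR_thetaq (q : R) :
    ((mulMR (R := R) w w').sum fun z c => c • (q ^ invCount z • Finsupp.single (invWord z) 1))
      = (((mrWords w w').map invWord).map
          fun y => Finsupp.single y (q ^ invCount (invWord y))).sum := by
  rw [← Finsupp.linearCombination_apply, mulMR_eq_sum_mrWords, map_list_sum, List.map_map,
    List.map_map]
  refine congrArg List.sum (List.map_congr_left fun z hz => ?_)
  simp [Finsupp.smul_single, (isPermWord_of_mem_mrWords hz).invWord_invWord]

end MalvenutoReutenauer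

theorem thetaq_hom_general (q : R) (w w' : List ℕ)
    (hw : isPermWord w) (hw' : isPermWord w') :
    ((mulMR (R := R) w w').sum fun z c =>
        c • (q ^ invCount z • Finsupp.single (invWord z) (1 : R))) =
      (q ^ invCount w * q ^ invCount w') • shiftShufQ q (invWord w) (invWord w') := by
  ext y
  have hu : ∀ x ∈ invWord w, x ≤ w.length := fun _ hx => hw.le_of_mem_invWord hx
  have hv : ∀ x ∈ (invWord w').map (· + w.length), w.length < x := by
    simp only [List.mem_map]
    rintro _ ⟨e, he, rfl⟩
    have := one_le_of_mem_invWord he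
    omega
  rw [sum_mulMR_thetaq, List.sum_map_single_apply_of_nodup nodup_map_invWord_mrWords,
    Finsupp.smul_apply, shiftShufQ, invWord_length, qshuf_apply_of_separated q hu hv,
    smul_eq_mul]
  simp only [mem_map_invWord_mrWords_iff hw hw']
  split_ifs with h
  · rw [invCount_invWord_of_filter hw hw' h, pow_add, pow_add]
  · rw [mul_zero]

/-- The map `θ_q(w) = q^{ℓ(w)} w⁻¹` satisfies `θ_q(w * w') = θ_q(w) *'_q θ_q(w')`
for all permutations `w, w'` (extending `θ_q` linearly to the MR product). -/
theorem thetaq_hom (q : R) (hq : IsUnit q) (w w' : List ℕ)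
    (hw : isPermWord w) (hw' : isPermWord w') :
    ((mulMR (R := R) w w').sum fun z c =>
        c • (q ^ invCount z • Finsupp.single (invWord z) (1 : R))) =
      (q ^ invCount w * q ^ invCount w') • shiftShufQ q (invWord w) (invWord w') :=
  thetaq_hom_general q w w' hw hw'
end

section
/- For standard Young tableaux: if T is in SYT(λ) then the length of the row word of its standardization satisfies ℓ(w(st(T))) = Σ_{i<j} λ_i λ_j − inv(T); hence sign(T) := (−1)^{ℓ(w(st(T)))} equals sign(T_λ)·(−1)^{inv(T)}, where T_λ is the unique standard tableau of shape λ with inv(T_λ) = 0. -/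
/-- The inversion number of a tableau:
`inv(T) = #{((i,j),(i',j')) : i < i', T(i,j) ≥ T(i',j')}`. -/
def invT (T : List (List ℕ)) : ℕ :=
  ∑ i ∈ Finset.range T.length, ∑ i' ∈ Finset.range T.length,
    if i < i' then
      ((T.getD i []).map (fun a => ((T.getD i' []).filter (fun b => b ≤ a)).length)).sum
    else 0

/-- The inversion number of a tableau with respect to columns:
`inv^c(T) = #{((i,j),(i',j')) : j < j', T(i,j) > T(i',j')}`. -/
def invcT (T : List (List ℕ)) : ℕ :=
  ∑ i ∈ Finset.range T.length, ∑ i' ∈ Finset.range T.length,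
    ∑ j ∈ Finset.range (T.getD i []).length, ∑ j' ∈ Finset.range (T.getD i' []).length,
      if j < j' ∧ (T.getD i' []).getD j' 0 < (T.getD i []).getD j 0 then 1 else 0

/-- `NE(λ)`: the number of strictly southwest–northeast pairs of boxes of `λ`,
`#{((i,j),(i',j')) ∈ λ×λ : i > i', j < j'}`. -/
def NEshape (s : List ℕ) : ℕ :=
  ∑ i ∈ Finset.range s.length, ∑ i' ∈ Finset.range s.length,
    ∑ j ∈ Finset.range (s.getD i 0), ∑ j' ∈ Finset.range (s.getD i' 0),
      if i' < i ∧ j < j' then 1 else 0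

/-- The shape of a tableau: the list of row lengths. -/
def shape (T : List (List ℕ)) : List ℕ := T.map List.length

/-- `T` is a semistandard Young tableau: nonempty rows of weakly decreasing lengths
(partition shape), positive entries weakly increasing along rows and strictly
increasing down columns. -/
def isSSYT (T : List (List ℕ)) : Prop :=
  (∀ r ∈ T, r ≠ []) ∧
  (∀ i, i + 1 < T.length → (T.getD (i + 1) []).length ≤ (T.getD i []).length) ∧
  (∀ i j, j + 1 < (T.getD i []).length →
    (T.getD i []).getD j 0 ≤ (T.getD i []).getD (j + 1) 0) ∧
  (∀ i j, i + 1 < T.length → j < (T.getD (i + 1) []).length →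
    (T.getD i []).getD j 0 < (T.getD (i + 1) []).getD j 0) ∧
  (∀ r ∈ T, ∀ a ∈ r, 0 < a)

/-- The standardization `st(T)` of a semistandard tableau: renumber the boxes in
the order of their values, ties broken by column, left to right. -/
def stTab (T : List (List ℕ)) : List (List ℕ) :=
  T.map (fun row => row.mapIdx (fun j a =>
    1 + ∑ i' ∈ Finset.range T.length,
      ((T.getD i' []).zipIdx.filter (fun p => p.1 < a ∨ (p.1 = a ∧ p.2 < j))).length))

/-- The row word `w(T)` of a tableau: entries read left-to-right,
bottom row to top row. -/
def rowWord (T : List (List ℕ)) : List ℕ := T.reverse.flatten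

/-- The entries of `T` are exactly `1, …, n`: `T` is standard. -/
def standardEntries (T : List (List ℕ)) : Prop :=
  T.flatten.Perm ((List.range T.flatten.length).map (· + 1))

/-- The superstandard tableau `T_λ`: row `i` is filled with the consecutive numbers
`λ₁+⋯+λ_{i-1}+1, …, λ₁+⋯+λ_i`; it is the unique standard tableau of shape `λ` with
`inv(T_λ) = 0`. -/
def Tlam (s : List ℕ) : List (List ℕ) :=
  (List.range s.length).map (fun i =>
    (List.range (s.getD i 0)).map (fun j => (s.take i).sum + j + 1))

/-!
As the entries of `T` are `1, …, n`, standardization does nothing. In the row word the rows are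
read bottom to top and each row is weakly increasing, so the only inversions come from an entry
`b` of a lower row `i'` and an entry `a` of a higher row `i < i'`; that pair is an inversion iff
`a < b`, while `inv(T)` counts it iff `b ≤ a`. Exactly one of the two happens, so
`ℓ(w(T)) + inv(T) = Σ_{i<i'} λ_i λ_{i'}`. The entries of `T_λ` increase strictly through the rows
from top to bottom, so `inv(T_λ) = 0`, and the sign identity follows.
-/

section PairSum

variable {α M : Type*} [AddCommMonoid M]

theorem sum_range_getD (L : List α) (d : α) (f : α → M) :
    ∑ i ∈ Finset.range L.length, f (L.getD i d) = (L.map f).sum := by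
  induction L with
  | nil => simp
  | cons a L ih =>
    rw [List.length_cons, Finset.sum_range_succ', List.map_cons, List.sum_cons, add_comm]
    simp only [List.getD_cons_succ, List.getD_cons_zero, ih]

theorem sum_map_ite_eq_length_filter (p : α → Prop) [DecidablePred p] (l : List α) :
    (l.map fun x => if p x then 1 else 0).sum = (l.filter (p ·)).length := by
  induction l with
  | nil => rfl
  | cons a l ih => by_cases h : p a <;> simp [h, ih, add_comm]

def pairSum (G : α → α → M) : List α → M
  | [] => 0
  | a :: L => (L.map (G a)).sum + pairSum G L

theorem pairSum_eq_sum_range_getD (G : α → α → M) (L : List α) (d : α) :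
    pairSum G L = ∑ i ∈ Finset.range L.length, ∑ j ∈ Finset.range L.length,
      if i < j then G (L.getD i d) (L.getD j d) else 0 := by
  induction L with
  | nil => rfl
  | cons a L ih =>
    simp only [pairSum, ih, List.length_cons, Finset.sum_range_succ', List.getD_cons_succ,
      List.getD_cons_zero, add_lt_add_iff_right, Nat.succ_pos, Nat.not_lt_zero, if_true, if_false,
      add_zero, sum_range_getD]
    exact add_comm _ _

theorem pairSum_eq_zero {G : α → α → M} {L : List α}
    (h : L.Pairwise fun x y => G x y = 0) : pairSum G L = 0 := by
  induction L with
  | nil => rfl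
  | cons a L ih =>
    rw [List.pairwise_cons] at h
    rw [pairSum, ih h.2, add_zero, List.sum_eq_zero]
    simpa using h.1

end PairSum

theorem invCount_cons (a : ℕ) (l : List ℕ) :
    invCount (a :: l) = (l.filter (· < a)).length + invCount l := by
  simp only [invCount, Finset.card_filter, Finset.sum_product, List.length_cons,
    Finset.sum_range_succ' _ l.length, List.getD_cons_succ, List.getD_cons_zero,
    add_lt_add_iff_right, Nat.succ_pos, Nat.not_lt_zero, true_and, false_and, if_false, add_zero,
    ← sum_map_ite_eq_length_filter, sum_range_getD l 0 fun x => if x < a then 1 else 0]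
  exact add_comm _ _

theorem invCount_append (u v : List ℕ) :
    invCount (u ++ v)
      = invCount u + invCount v + (u.map fun a => (v.filter (· < a)).length).sum := by
  induction u with
  | nil => simp [invCount]
  | cons a u ih =>
    rw [List.cons_append, invCount_cons, invCount_cons, ih, List.filter_append,
      List.length_append, List.map_cons, List.sum_cons]
    ring

theorem invCount_eq_zero_of_pairwise {l : List ℕ} (h : l.Pairwise (· ≤ ·)) : invCount l = 0 := by
  induction l with
  | nil => simp [invCount]
  | cons a l ih =>
    rw [List.pairwise_cons] at h
    rw [invCount_cons, ih h.2, add_zero, List.length_eq_zero_iff, List.filter_eq_nil_iff]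
    simpa using h.1

theorem sum_length_filter_lt_add_sum_length_filter_le {α : Type*} [LinearOrder α] (u v : List α) :
    (u.map fun a => (v.filter (· < a)).length).sum + (v.map fun b => (u.filter (· ≤ b)).length).sum
      = u.length * v.length := by
  induction u with
  | nil => simp
  | cons a u ih =>
    have hsplit : (v.filter (· < a)).length + (v.filter (a ≤ ·)).length = v.length := by
      simp only [← List.countP_eq_length_filter, List.length_eq_countP_add_countP (· < a) (l := v),
        decide_eq_true_eq, not_lt]
    have hcons : ∀ b, ((a :: u).filter (· ≤ b)).length
        = (if a ≤ b then 1 else 0) + (u.filter (· ≤ b)).length := by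
      intro b
      by_cases h : a ≤ b <;> simp [h, add_comm]
    rw [List.map_cons, List.sum_cons, List.length_cons, List.map_congr_left fun b _ => hcons b,
      List.sum_map_add, sum_map_ite_eq_length_filter (a ≤ ·), add_mul, one_mul, ← ih, ← hsplit]
    ring

theorem invT_eq_pairSum (T : List (List ℕ)) :
    invT T = pairSum (fun r r' => (r.map fun a => (r'.filter (· ≤ a)).length).sum) T := by
  rw [pairSum_eq_sum_range_getD _ T [], invT]

theorem rowWord_cons (R : List ℕ) (T : List (List ℕ)) : rowWord (R :: T) = rowWord T ++ R := by
  simp [rowWord]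

theorem invCount_rowWord_add_invT {T : List (List ℕ)} (h : ∀ r ∈ T, r.Pairwise (· ≤ ·)) :
    invCount (rowWord T) + invT T = pairSum (· * ·) (shape T) := by
  rw [invT_eq_pairSum]
  induction T with
  | nil => rfl
  | cons R T ih =>
    have hcross : ((rowWord T).map fun a => (R.filter (· < a)).length).sum
        = (T.map fun r => (r.map fun a => (R.filter (· < a)).length).sum).sum := by
      rw [rowWord, List.map_flatten, List.sum_flatten, List.map_reverse, List.map_reverse,
        List.sum_reverse, List.map_map]
      rfl
    have hpairs : ((T.map fun r => (r.map fun a => (R.filter (· < a)).length).sum).sum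
        + (T.map fun r => (R.map fun a => (r.filter (· ≤ a)).length).sum).sum)
        = ((shape T).map (R.length * ·)).sum := by
      rw [← List.sum_map_add, shape, List.map_map]
      refine congrArg List.sum (List.map_congr_left fun r _ => ?_)
      rw [sum_length_filter_lt_add_sum_length_filter_le, Function.comp_apply, mul_comm]
    rw [rowWord_cons, invCount_append, invCount_eq_zero_of_pairwise (h R List.mem_cons_self),
      hcross, pairSum, shape, List.map_cons, pairSum, ← shape,
      ← ih fun r hr => h r (List.mem_cons_of_mem _ hr), ← hpairs]
    ring

theorem length_filter_zipIdx (r : List ℕ) (a j n : ℕ) :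
    ((r.zipIdx n).filter fun p => p.1 < a ∨ (p.1 = a ∧ p.2 < j)).length
      = (r.filter (· < a)).length + (r.take (j - n)).count a := by
  induction r generalizing n with
  | nil => simp
  | cons x r ih =>
    simp only [List.zipIdx_cons, List.filter_cons, apply_ite List.length, List.length_cons, ih]
    rcases Nat.lt_or_ge n j with hn | hn
    · rw [show j - n = j - (n + 1) + 1 by omega, List.take_succ_cons, List.count_cons]
      grind
    · rw [show j - n = 0 by omega, show j - (n + 1) = 0 by omega]
      grind

theorem sum_count_take_eq_zero {T : List (List ℕ)} (hT : T.flatten.Nodup) {row : List ℕ}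
    (hrow : row ∈ T) {j : ℕ} (hj : j < row.length) :
    (T.map fun r => (r.take j).count row[j]).sum = 0 := by
  -- `row[j]` occurs once in `T`, and that occurrence is already in `row.drop j`.
  have hle : (T.map (List.count row[j])).sum ≤ 1 := by
    rw [← List.count_flatten]
    exact List.nodup_iff_count_le_one.mp hT _
  have hsplit : (T.map (List.count row[j])).sum
      = (T.map fun r => (r.take j).count row[j]).sum
        + (T.map fun r => (r.drop j).count row[j]).sum := by
    rw [← List.sum_map_add]
    congr 1
    exact List.map_congr_left fun r _ => by rw [← List.count_append, List.take_append_drop]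
  have hrow_drop : 1 ≤ (row.drop j).count row[j] := by
    rw [List.drop_eq_getElem_cons hj, List.count_cons_self]
    omega
  have hdrop : 1 ≤ (T.map fun r => (r.drop j).count row[j]).sum :=
    hrow_drop.trans (List.le_sum_of_mem (List.mem_map_of_mem hrow))
  omega

theorem length_filter_lt_add_one_of_standardEntries {T : List (List ℕ)}
    (hT : standardEntries T) {a : ℕ} (ha : a ∈ T.flatten) :
    (T.flatten.filter (· < a)).length + 1 = a := by
  obtain ⟨k, hk, rfl⟩ := List.mem_map.mp ((List.Perm.mem_iff hT).mp ha)
  have hk' : k < T.flatten.length := List.mem_range.mp hk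
  rw [(List.Perm.filter _ hT).length_eq, List.filter_map, List.length_map]
  have hshift : (List.range T.flatten.length).filter ((fun x => decide (x < k + 1)) ∘ (· + 1))
      = (List.Ico 0 T.flatten.length).filter (· < k) := by
    rw [List.Ico.zero_bot]
    congr 1
    ext x
    simp
  rw [hshift, List.Ico.filter_lt, List.Ico.length]
  omega

theorem stTab_eq_self {T : List (List ℕ)} (hT : standardEntries T) : stTab T = T := by
  have hnodup : T.flatten.Nodup :=
    hT.nodup_iff.mpr ((List.nodup_range).map (add_left_injective 1))
  refine (List.map_congr_left fun row hrow => ?_).trans (List.map_id' T)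
  refine List.ext_getElem (by simp) fun j _ hj => ?_
  have ha : row[j] ∈ T.flatten := List.mem_flatten.mpr ⟨row, hrow, List.getElem_mem hj⟩
  rw [List.getElem_mapIdx, sum_range_getD T [] fun r =>
    (r.zipIdx.filter fun p => p.1 < row[j] ∨ (p.1 = row[j] ∧ p.2 < j)).length]
  simp only [length_filter_zipIdx, Nat.sub_zero, List.sum_map_add,
    sum_count_take_eq_zero hnodup hrow hj, add_zero]
  have hcount := length_filter_lt_add_one_of_standardEntries hT ha
  rw [List.filter_flatten, List.length_flatten, List.map_map] at hcount
  exact (add_comm _ _).trans hcount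

theorem pairwise_le_of_isSSYT {T : List (List ℕ)} (hT : isSSYT T) :
    ∀ r ∈ T, r.Pairwise (· ≤ ·) := by
  intro r hr
  obtain ⟨i, hi, rfl⟩ := List.getElem_of_mem hr
  have hrow := hT.2.2.1 i
  rw [List.getD_eq_getElem _ _ hi] at hrow
  rw [← List.isChain_iff_pairwise, List.isChain_iff_getElem]
  intro k hk
  have := hrow k hk
  rwa [List.getD_eq_getElem _ _ (Nat.lt_of_succ_lt hk), List.getD_eq_getElem _ _ hk] at this

theorem invT_eq_zero_of_pairwise {T : List (List ℕ)}
    (h : T.Pairwise fun r r' => ∀ a ∈ r, ∀ b ∈ r', a < b) : invT T = 0 := by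
  rw [invT_eq_pairSum]
  refine pairSum_eq_zero (h.imp fun hlt => List.sum_eq_zero fun n hn => ?_)
  obtain ⟨a, ha, rfl⟩ := List.mem_map.mp hn
  simpa [List.filter_eq_nil_iff] using fun b hb => hlt a ha b hb

theorem Tlam_cons (a : ℕ) (s : List ℕ) :
    Tlam (a :: s) = (List.range a).map (· + 1) :: (Tlam s).map (List.map (· + a)) := by
  rw [Tlam, List.length_cons, List.range_succ_eq_map, List.map_cons]
  congr 1
  · simp
  · rw [Tlam, List.map_map, List.map_map]
    refine List.map_congr_left fun i _ => ?_
    simp only [Function.comp_apply, List.getD_cons_succ, List.take_succ_cons, List.sum_cons,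
      List.map_map]
    refine List.map_congr_left fun j _ => ?_
    simp only [Function.comp_apply]
    omega

theorem flatten_Tlam (s : List ℕ) : (Tlam s).flatten = (List.range s.sum).map (· + 1) := by
  induction s with
  | nil => simp [Tlam]
  | cons a s ih =>
    rw [Tlam_cons, List.flatten_cons, ← List.map_flatten, ih, List.sum_cons, List.range_add,
      List.map_append, List.map_map, List.map_map]
    congr 1
    refine List.map_congr_left fun k _ => ?_
    simp only [Function.comp_apply]
    omega

theorem standardEntries_Tlam (s : List ℕ) : standardEntries (Tlam s) := by
  rw [standardEntries, flatten_Tlam]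
  simp

theorem pairwise_lt_flatten_Tlam (s : List ℕ) : (Tlam s).flatten.Pairwise (· < ·) := by
  rw [flatten_Tlam, List.pairwise_map]
  exact List.pairwise_lt_range.imp fun h => by omega

theorem shape_Tlam (s : List ℕ) : shape (Tlam s) = s := by
  apply List.ext_getElem (by simp [shape, Tlam])
  intro i _ hi
  simp [shape, Tlam, List.getElem?_eq_getElem hi]

/-- For `T ∈ SYT(λ)`: `ℓ(w(st(T))) = Σ_{i<j} λ_i λ_j − inv(T)` (stated additively),
hence `sign(T) := (−1)^{ℓ(w(st(T)))}` equals `sign(T_λ) · (−1)^{inv(T)}`. -/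
theorem length_rowWord_st (T : List (List ℕ)) (hT : isSSYT T)
    (hstd : standardEntries T) :
    invCount (rowWord (stTab T)) + invT T =
      (∑ i ∈ Finset.range (shape T).length, ∑ j ∈ Finset.range (shape T).length,
        if i < j then (shape T).getD i 0 * (shape T).getD j 0 else 0) ∧
    ((-1 : ℤ) ^ invCount (rowWord (stTab T)) =
      (-1 : ℤ) ^ invCount (rowWord (stTab (Tlam (shape T)))) * (-1 : ℤ) ^ invT T) := by
  have hT_eq : invCount (rowWord (stTab T)) + invT T = pairSum (· * ·) (shape T) := by
    rw [stTab_eq_self hstd]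
    exact invCount_rowWord_add_invT (pairwise_le_of_isSSYT hT)
  have hTlam_eq : invCount (rowWord (stTab (Tlam (shape T)))) = pairSum (· * ·) (shape T) := by
    obtain ⟨hrows, hcross⟩ := List.pairwise_flatten.mp (pairwise_lt_flatten_Tlam (shape T))
    have := invCount_rowWord_add_invT fun r hr => (hrows r hr).imp le_of_lt
    rwa [invT_eq_zero_of_pairwise hcross, shape_Tlam, add_zero,
      ← stTab_eq_self (standardEntries_Tlam _)] at this
  refine ⟨hT_eq.trans (pairSum_eq_sum_range_getD _ _ 0), ?_⟩
  rw [hTlam_eq, ← hT_eq, pow_add, mul_assoc, ← pow_add, Even.neg_one_pow ⟨_, rfl⟩, mul_one]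
end

section
/- Row-shape shuffle lemma, part (1): for fixed p + q = n, the map sending a split of [n] into {i₁<...<i_p} and {j₁<...<j_q} to the tableau product (row tableau with entries i₁,...,i_p) · (row tableau with entries j₁,...,j_q) (Schensted insertion of j₁,...,j_q into the first row) is injective into standard Young tableaux with at most two rows. -/
/-- Schensted row insertion of `x` into a row. -/
def rowInsert (r : List ℕ) (x : ℕ) : List ℕ × Option ℕ :=
  match r.findIdx? (fun a => x < a) with
  | none => (r ++ [x], none)
  | some i => (r.set i x, some (r.getD i 0))

/-- Schensted insertion of `x` into a tableau. -/
def insertTab : List (List ℕ) → ℕ → List (List ℕ)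
  | [], x => [[x]]
  | r :: rest, x =>
    match rowInsert r x with
    | (r', none) => r' :: rest
    | (r', some y) => r' :: insertTab rest y

/-- The insertion tableau `P(w)` of a word. In particular, for a split
`([n] = {i₁<…<i_p} ⊔ {j₁<…<j_q})`, `P(i₁⋯i_p j₁⋯j_q)` is the dot product of the two
row tableaux, obtained by Schensted insertion of `j₁,…,j_q` into the row `i₁⋯i_p`. -/
def Pword (w : List ℕ) : List (List ℕ) := w.foldl insertTab []

/-!
Inserting the increasing word of `B` into the row of `A` only bumps letters of `A`, and these
arrive in the second row in increasing order, so the product has at most two rows. Injectivity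
follows by induction on the largest letter `N`. Erasing `N` from both rows gives the product of the
smaller split. Moreover `N ∈ B` exactly when `N` lies in a first row longer than `|A|`: a letter of
`B` is never bumped and the first row never shrinks, whereas if `N ∈ A` stays in the first row then
every letter of `B` had to bump, so the first row kept length `|A|`.
-/

theorem exists_eq_append_cons_of_exists_lt {α : Type*} [LinearOrder α] {r : List α} {x : α}
    (h : ∃ a ∈ r, x < a) : ∃ l₁ y l₂, r = l₁ ++ y :: l₂ ∧ (∀ a ∈ l₁, a ≤ x) ∧ x < y := by
  induction r with
  | nil => simp at h
  | cons a r ih =>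
    by_cases hxa : x < a
    · exact ⟨[], a, r, rfl, by simp, hxa⟩
    · obtain ⟨l₁, y, l₂, rfl, hl₁, hxy⟩ := ih (by simpa [hxa] using h)
      exact ⟨a :: l₁, y, l₂, rfl, by simp_all, hxy⟩

theorem rowInsert_of_forall_le {r : List ℕ} {x : ℕ} (h : ∀ a ∈ r, a ≤ x) :
    rowInsert r x = (r ++ [x], none) := by
  have : r.findIdx? (fun a => decide (x < a)) = none := by
    simpa [List.findIdx?_eq_none_iff] using h
  simp only [rowInsert, this]

theorem rowInsert_append_cons {l₁ l₂ : List ℕ} {x y : ℕ} (h : ∀ a ∈ l₁, a ≤ x) (hxy : x < y) :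
    rowInsert (l₁ ++ y :: l₂) x = (l₁ ++ x :: l₂, some y) := by
  have : (l₁ ++ y :: l₂).findIdx? (fun a => decide (x < a)) = some l₁.length := by
    have hl₁ : l₁.findIdx? (fun a => decide (x < a)) = none := by
      simpa [List.findIdx?_eq_none_iff] using h
    simp [List.findIdx?_append, hl₁, List.findIdx?_cons, hxy]
  simp [rowInsert, this, List.set_append_right]

def insertTwoRow (rs : List ℕ × List ℕ) (x : ℕ) : List ℕ × List ℕ :=
  ((rowInsert rs.1 x).1, rs.2 ++ (rowInsert rs.1 x).2.toList)

theorem insertTwoRow_of_forall_le {r s : List ℕ} {x : ℕ} (h : ∀ a ∈ r, a ≤ x) :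
    insertTwoRow (r, s) x = (r ++ [x], s) := by
  simp [insertTwoRow, rowInsert_of_forall_le h]

theorem insertTwoRow_append_cons {l₁ l₂ s : List ℕ} {x y : ℕ} (h : ∀ a ∈ l₁, a ≤ x)
    (hxy : x < y) : insertTwoRow (l₁ ++ y :: l₂, s) x = (l₁ ++ x :: l₂, s ++ [y]) := by
  simp [insertTwoRow, rowInsert_append_cons h hxy]

theorem foldl_insertTwoRow_of_forall_le {v r s : List ℕ} (hv : v.Pairwise (· ≤ ·))
    (h : ∀ a ∈ r, ∀ x ∈ v, a ≤ x) : v.foldl insertTwoRow (r, s) = (r ++ v, s) := by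
  induction v generalizing r with
  | nil => simp
  | cons x v ih =>
    rw [List.pairwise_cons] at hv
    rw [List.foldl_cons, insertTwoRow_of_forall_le fun a ha => h a ha x (by simp),
      ih hv.2 (by simp_all [or_imp, forall_and])]
    simp

theorem length_le_length_foldl_insertTwoRow (v r s : List ℕ) :
    r.length ≤ (v.foldl insertTwoRow (r, s)).1.length := by
  induction v generalizing r s with
  | nil => simp
  | cons x v ih =>
    rw [List.foldl_cons]
    by_cases h : ∀ a ∈ r, a ≤ x
    · rw [insertTwoRow_of_forall_le h]
      exact (ih _ _).trans' (by simp)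
    · push Not at h
      obtain ⟨l₁, y, l₂, rfl, hl₁, hxy⟩ := exists_eq_append_cons_of_exists_lt h
      rw [insertTwoRow_append_cons hl₁ hxy]
      simpa using ih (l₁ ++ x :: l₂) (s ++ [y])

theorem foldl_insertTwoRow_forall {P : ℕ → Prop} {v r s : List ℕ} (hr : ∀ a ∈ r, P a)
    (hs : ∀ a ∈ s, P a) (hv : ∀ x ∈ v, P x) :
    (∀ a ∈ (v.foldl insertTwoRow (r, s)).1, P a) ∧
      ∀ a ∈ (v.foldl insertTwoRow (r, s)).2, P a := by
  induction v generalizing r s with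
  | nil => exact ⟨hr, hs⟩
  | cons x v ih =>
    rw [List.foldl_cons]
    by_cases h : ∀ a ∈ r, a ≤ x
    · rw [insertTwoRow_of_forall_le h]
      exact ih (by simp_all [or_imp, forall_and]) hs (by simp_all)
    · push Not at h
      obtain ⟨l₁, y, l₂, rfl, hl₁, hxy⟩ := exists_eq_append_cons_of_exists_lt h
      rw [insertTwoRow_append_cons hl₁ hxy]
      exact ih (by simp_all [or_imp, forall_and]) (by simp_all [or_imp, forall_and]) (by simp_all)

/-- A letter `N` larger than the whole word `v` is either never bumped, and then every letter of
`v` bumps, or it is bumped and then lands at the end of the second row. -/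
theorem foldl_insertTwoRow_append_max {v r s R S : List ℕ} {N : ℕ} (hv : v.Pairwise (· ≤ ·))
    (hN : ∀ x ∈ v, x < N) (hRS : v.foldl insertTwoRow (r, s) = (R, S)) :
    (v.foldl insertTwoRow (r ++ [N], s) = (R ++ [N], S) ∧ R.length = r.length) ∨
      v.foldl insertTwoRow (r ++ [N], s) = (R, S ++ [N]) := by
  induction v generalizing r s with
  | nil =>
    simp only [List.foldl_nil, Prod.mk.injEq] at hRS
    simp [hRS]
  | cons x v ih =>
    rw [List.pairwise_cons] at hv
    rw [List.foldl_cons] at hRS ⊢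
    by_cases h : ∀ a ∈ r, a ≤ x
    · have hxN : x < N := hN x (by simp)
      have happ (t : List ℕ) : v.foldl insertTwoRow (r ++ [x], t) = (r ++ [x] ++ v, t) :=
        foldl_insertTwoRow_of_forall_le hv.2 fun a ha y hy => by
          rcases List.mem_append.1 ha with ha | ha
          · exact (h a ha).trans (hv.1 y hy)
          · simp_all
      rw [insertTwoRow_of_forall_le h, happ] at hRS
      rw [insertTwoRow_append_cons h hxN, happ]
      simp_all
    · push Not at h
      obtain ⟨l₁, y, l₂, rfl, hl₁, hxy⟩ := exists_eq_append_cons_of_exists_lt h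
      rw [insertTwoRow_append_cons hl₁ hxy] at hRS
      rw [List.append_assoc, List.cons_append, insertTwoRow_append_cons hl₁ hxy]
      simpa using ih hv.2 (fun z hz => hN z (by simp [hz])) hRS

def twoRowTableau (rs : List ℕ × List ℕ) : List (List ℕ) :=
  if rs.2 = [] then [rs.1] else [rs.1, rs.2]

theorem twoRowTableau_injective : Function.Injective twoRowTableau := by
  rintro ⟨r, s⟩ ⟨r', s'⟩ h
  unfold twoRowTableau at h
  split_ifs at h <;> simp_all

theorem insertTab_twoRowTableau {r s : List ℕ} {x : ℕ}
    (hs : ∀ y, (rowInsert r x).2 = some y → ∀ z ∈ s, z ≤ y) :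
    insertTab (twoRowTableau (r, s)) x = twoRowTableau (insertTwoRow (r, s) x) := by
  rcases h : rowInsert r x with ⟨r', _ | y⟩
  · by_cases hs0 : s = [] <;> simp [twoRowTableau, insertTwoRow, insertTab, h, hs0]
  · rw [h] at hs
    by_cases hs0 : s = [] <;>
      simp [twoRowTableau, insertTwoRow, insertTab, h, hs0, rowInsert_of_forall_le (hs y rfl)]

/-- While the inserted word is weakly increasing, `hs` is an invariant: every letter bumped out of
the first row is at least the whole second row, where Schensted insertion therefore appends it. -/
theorem foldl_insertTab_twoRowTableau {v r s : List ℕ} (hr : r.Pairwise (· ≤ ·))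
    (hv : v.Pairwise (· ≤ ·)) (hs : ∀ z ∈ s, ∀ a ∈ r, ∀ x ∈ v, x < a → z ≤ a) :
    v.foldl insertTab (twoRowTableau (r, s)) = twoRowTableau (v.foldl insertTwoRow (r, s)) := by
  induction v generalizing r s with
  | nil => rfl
  | cons x v ih =>
    rw [List.pairwise_cons] at hv
    by_cases h : ∀ a ∈ r, a ≤ x
    · rw [List.foldl_cons, List.foldl_cons,
        insertTab_twoRowTableau (by simp [rowInsert_of_forall_le h]), insertTwoRow_of_forall_le h]
      refine ih (List.pairwise_append.2 ⟨hr, by simp, by simpa using h⟩) hv.2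
        fun z hz a ha y hy hya => ?_
      rcases List.mem_append.1 ha with ha | ha
      · exact hs z hz a ha y (by simp [hy]) hya
      · simp only [List.mem_singleton] at ha
        exact absurd (hv.1 y hy) (by omega)
    · push Not at h
      obtain ⟨l₁, y, l₂, rfl, hl₁, hxy⟩ := exists_eq_append_cons_of_exists_lt h
      have hyl₂ : ∀ a ∈ l₂, y ≤ a := by simp_all [List.pairwise_append]
      rw [List.foldl_cons, List.foldl_cons, insertTab_twoRowTableau (by
          simp only [rowInsert_append_cons hl₁ hxy, Option.some.injEq]
          rintro _ rfl z hz
          exact hs z hz y (by simp) x (by simp) hxy),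
        insertTwoRow_append_cons hl₁ hxy]
      refine ih ?_ hv.2 fun z hz a ha x' hx' hxa => ?_
      · simp only [List.pairwise_append, List.pairwise_cons, List.mem_cons] at hr ⊢
        refine ⟨hr.1, ⟨fun b hb => hxy.le.trans (hyl₂ b hb), hr.2.1.2⟩, ?_⟩
        rintro a ha b (rfl | hb)
        exacts [hl₁ a ha, hr.2.2 a ha b (Or.inr hb)]
      · have hxx' := hv.1 x' hx'
        simp only [List.mem_append, List.mem_cons] at ha
        rw [List.mem_append, List.mem_singleton] at hz
        rcases ha with ha | rfl | ha
        · exact absurd ((hl₁ a ha).trans hxx') (not_le.2 hxa)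
        · exact absurd hxx' (not_le.2 hxa)
        rcases hz with hz | rfl
        exacts [hs z hz a (by simp [ha]) x' (by simp [hx']) hxa, hyl₂ a ha]

theorem Finset.sort_insert_of_forall_lt {α : Type*} [LinearOrder α] {s : Finset α} {b : α}
    (h : ∀ a ∈ s, a < b) : (insert b s).sort (· ≤ ·) = s.sort (· ≤ ·) ++ [b] := by
  have hb : b ∉ s := fun hb => lt_irrefl b (h b hb)
  have hfin : (s.sort (· ≤ ·) ++ [b]).toFinset = insert b s := by
    ext; simp
  rw [← hfin, List.toFinset_sort]
  · exact List.pairwise_append.2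
      ⟨s.pairwise_sort _, by simp, by simpa using fun a ha => (h a ha).le⟩
  · simp [List.nodup_append, hb]

/-- The rows of the tableau product `(row tableau of A) · (row tableau of B)`. -/
def rowProduct (A B : Finset ℕ) : List ℕ × List ℕ :=
  (B.sort (· ≤ ·)).foldl insertTwoRow (A.sort (· ≤ ·), [])

theorem Pword_sort_append_sort {A B : Finset ℕ} (h : (A ∪ B).Nonempty) :
    Pword (A.sort (· ≤ ·) ++ B.sort (· ≤ ·)) = twoRowTableau (rowProduct A B) := by
  have hne : A.sort (· ≤ ·) ++ B.sort (· ≤ ·) ≠ [] := by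
    obtain ⟨x, hx⟩ := h
    exact List.ne_nil_of_mem (a := x) (by simpa using hx)
  obtain ⟨a, w, hw⟩ := List.exists_cons_of_ne_nil hne
  -- `Pword` starts from the empty tableau, which after one step behaves like `[[]]`
  have hstart : Pword (A.sort (· ≤ ·) ++ B.sort (· ≤ ·)) =
      (A.sort (· ≤ ·) ++ B.sort (· ≤ ·)).foldl insertTab (twoRowTableau ([], [])) := by
    rw [hw]; rfl
  rw [hstart, List.foldl_append,
    foldl_insertTab_twoRowTableau List.Pairwise.nil (A.pairwise_sort _) (by simp),
    foldl_insertTwoRow_of_forall_le (A.pairwise_sort _) (by simp), List.nil_append,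
    foldl_insertTab_twoRowTableau (A.pairwise_sort _) (B.pairwise_sort _) (by simp)]
  rfl

theorem rowProduct_forall {P : ℕ → Prop} {A B : Finset ℕ} (h : ∀ x ∈ A ∪ B, P x) :
    (∀ x ∈ (rowProduct A B).1, P x) ∧ ∀ x ∈ (rowProduct A B).2, P x :=
  foldl_insertTwoRow_forall (by simp_all) (by simp) (by simp_all)

theorem card_le_length_rowProduct (A B : Finset ℕ) : A.card ≤ (rowProduct A B).1.length := by
  simpa [rowProduct] using length_le_length_foldl_insertTwoRow (B.sort (· ≤ ·)) (A.sort (· ≤ ·)) []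

theorem rowProduct_insert_right {A B : Finset ℕ} {N : ℕ} (h : ∀ x ∈ A ∪ B, x < N) :
    rowProduct A (insert N B) = ((rowProduct A B).1 ++ [N], (rowProduct A B).2) := by
  rw [rowProduct, Finset.sort_insert_of_forall_lt (by simp_all), List.foldl_append, ← rowProduct]
  exact insertTwoRow_of_forall_le fun a ha => ((rowProduct_forall h).1 a ha).le

theorem rowProduct_insert_left {A B : Finset ℕ} {N : ℕ} {R S : List ℕ}
    (h : ∀ x ∈ A ∪ B, x < N) (hRS : rowProduct A B = (R, S)) :
    (rowProduct (insert N A) B = (R ++ [N], S) ∧ R.length = A.card) ∨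
      rowProduct (insert N A) B = (R, S ++ [N]) := by
  rw [rowProduct, Finset.sort_insert_of_forall_lt (by simp_all)]
  simpa using foldl_insertTwoRow_append_max (B.pairwise_sort _) (by simp_all) hRS

section MaxEntry

variable {A B : Finset ℕ} {N : ℕ}

theorem forall_lt_of_mem_erase_union (hmax : ∀ x ∈ A ∪ B, x ≤ N) :
    ∀ x ∈ A.erase N ∪ B.erase N, x < N := by
  intro x hx
  rw [← Finset.erase_union_distrib, Finset.mem_erase] at hx
  exact lt_of_le_of_ne (hmax x hx.2) hx.1

theorem rowProduct_erase_max (hd : Disjoint A B) (hmax : ∀ x ∈ A ∪ B, x ≤ N)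
    (hN : N ∈ A ∪ B) :
    rowProduct (A.erase N) (B.erase N) =
      ((rowProduct A B).1.erase N, (rowProduct A B).2.erase N) := by
  have hlt := forall_lt_of_mem_erase_union hmax
  rcases h0 : rowProduct (A.erase N) (B.erase N) with ⟨R, S⟩
  have hbound := rowProduct_forall hlt
  rw [h0] at hbound
  have hR : N ∉ R := fun h => lt_irrefl N (hbound.1 N h)
  have hS : N ∉ S := fun h => lt_irrefl N (hbound.2 N h)
  rcases Finset.mem_union.1 hN with hA | hB
  · rw [Finset.erase_eq_of_notMem (Finset.disjoint_left.1 hd hA)] at h0 hlt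
    rw [← Finset.insert_erase hA]
    rcases rowProduct_insert_left hlt h0 with ⟨h, -⟩ | h <;>
      simp [h, List.erase_append_right, List.erase_of_not_mem, hR, hS]
  · rw [Finset.erase_eq_of_notMem (Finset.disjoint_right.1 hd hB)] at h0 hlt
    rw [← Finset.insert_erase hB, rowProduct_insert_right hlt, h0]
    simp [List.erase_append_right, List.erase_of_not_mem, hR, hS]

theorem mem_right_iff_of_max (hd : Disjoint A B) (hmax : ∀ x ∈ A ∪ B, x ≤ N) (hN : N ∈ A ∪ B) :
    N ∈ B ↔ A.card < (rowProduct A B).1.length ∧ N ∈ (rowProduct A B).1 := by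
  have hlt := forall_lt_of_mem_erase_union hmax
  rcases h0 : rowProduct (A.erase N) (B.erase N) with ⟨R, S⟩
  have hbound := (rowProduct_forall hlt).1
  rw [h0] at hbound
  have hR : N ∉ R := fun h => lt_irrefl N (hbound N h)
  rcases Finset.mem_union.1 hN with hA | hB
  · have hB := Finset.disjoint_left.1 hd hA
    rw [Finset.erase_eq_of_notMem hB] at h0 hlt
    have hcard := Finset.card_erase_add_one hA
    rw [← Finset.insert_erase hA]
    rcases rowProduct_insert_left hlt h0 with ⟨h, hlen⟩ | h
    · simp [h, hB]
      omega
    · simp [h, hR, hB]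
  · rw [Finset.erase_eq_of_notMem (Finset.disjoint_right.1 hd hB)] at h0 hlt
    have hlen : A.card ≤ R.length := by simpa [h0] using card_le_length_rowProduct A (B.erase N)
    rw [← Finset.insert_erase hB, rowProduct_insert_right hlt, h0]
    simp only [Finset.mem_insert_self, List.length_append, List.length_singleton, List.mem_append,
      List.mem_singleton, or_true, and_true, true_iff]
    omega

end MaxEntry

theorem eq_of_rowProduct_eq {A B A' B' : Finset ℕ} (hd : Disjoint A B) (hd' : Disjoint A' B')
    (hU : A ∪ B = A' ∪ B') (hcard : A.card = A'.card) (h : rowProduct A B = rowProduct A' B') :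
    A = A' := by
  induction hAB : A ∪ B using Finset.induction_on_max generalizing A B A' B' with
  | empty =>
    exact (Finset.union_eq_empty.1 hAB).1.trans (Finset.union_eq_empty.1 (hU ▸ hAB)).1.symm
  | insert N U hlt ih =>
    have hN : N ∈ A ∪ B := hAB ▸ Finset.mem_insert_self N U
    have hmax : ∀ x ∈ A ∪ B, x ≤ N := by
      rw [hAB]
      exact fun x hx => (Finset.mem_insert.1 hx).elim le_of_eq fun hx => (hlt x hx).le
    have hN' : N ∈ A' ∪ B' := hU ▸ hN
    have hmax' : ∀ x ∈ A' ∪ B', x ≤ N := hU ▸ hmax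
    have hB : N ∈ B ↔ N ∈ B' := by
      rw [mem_right_iff_of_max hd hmax hN, mem_right_iff_of_max hd' hmax' hN', h, hcard]
    have hA : N ∈ A ↔ N ∈ A' := by
      have hNAB := Finset.mem_union.1 hN
      have hNAB' := Finset.mem_union.1 hN'
      have hnB : N ∈ A → N ∉ B := fun h => Finset.disjoint_left.1 hd h
      have hnB' : N ∈ A' → N ∉ B' := fun h => Finset.disjoint_left.1 hd' h
      tauto
    have herase : A.erase N = A'.erase N := by
      refine ih (hd.mono (A.erase_subset N) (B.erase_subset N))
        (hd'.mono (A'.erase_subset N) (B'.erase_subset N)) ?_ ?_ ?_ ?_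
      · rw [← Finset.erase_union_distrib, ← Finset.erase_union_distrib, hU]
      · simp [Finset.card_erase_eq_ite, hA, hcard]
      · rw [rowProduct_erase_max hd hmax hN, rowProduct_erase_max hd' hmax' hN', h]
      · rw [← Finset.erase_union_distrib, hAB, Finset.erase_insert fun h => lt_irrefl N (hlt N h)]
    ext x
    by_cases hx : x = N
    · exact hx ▸ hA
    · simpa [hx] using congrArg (x ∈ ·) herase

theorem row_shuffle_injective_general (n p : ℕ)
    (A B A' B' : Finset ℕ)
    (hAB : A ∪ B = Finset.Icc 1 n) (hdisj : Disjoint A B)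
    (hA : A.card = p)
    (hAB' : A' ∪ B' = Finset.Icc 1 n) (hdisj' : Disjoint A' B')
    (hA' : A'.card = p)
    (heq : Pword (A.sort (· ≤ ·) ++ B.sort (· ≤ ·)) =
      Pword (A'.sort (· ≤ ·) ++ B'.sort (· ≤ ·))) :
    A = A' ∧ B = B' := by
  have hU : A ∪ B = A' ∪ B' := hAB.trans hAB'.symm
  have hAA' : A = A' := by
    rcases (A ∪ B).eq_empty_or_nonempty with hempty | hne
    · exact (Finset.union_eq_empty.1 hempty).1.trans (Finset.union_eq_empty.1 (hU ▸ hempty)).1.symm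
    · rw [Pword_sort_append_sort hne, Pword_sort_append_sort (hU ▸ hne)] at heq
      exact eq_of_rowProduct_eq hdisj hdisj' hU (hA.trans hA'.symm) (twoRowTableau_injective heq)
  refine ⟨hAA', ?_⟩
  rw [← Finset.union_sdiff_cancel_left hdisj, ← Finset.union_sdiff_cancel_left hdisj', hU, hAA']

/-- Shuffle lemma for row shapes, part (1): for fixed `p + q = n`, the map sending a
split of `[n]` into parts `{i₁<…<i_p}` and `{j₁<…<j_q}` to the tableau product
`(i₁ ⋯ i_p) · (j₁ ⋯ j_q)` (a standard Young tableau with at most two rows) is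
injective. -/
theorem row_shuffle_injective (n p q : ℕ) (hpq : p + q = n)
    (A B A' B' : Finset ℕ)
    (hAB : A ∪ B = Finset.Icc 1 n) (hdisj : Disjoint A B)
    (hA : A.card = p) (hB : B.card = q)
    (hAB' : A' ∪ B' = Finset.Icc 1 n) (hdisj' : Disjoint A' B')
    (hA' : A'.card = p) (hB' : B'.card = q)
    (heq : Pword (A.sort (· ≤ ·) ++ B.sort (· ≤ ·)) =
      Pword (A'.sort (· ≤ ·) ++ B'.sort (· ≤ ·))) :
    A = A' ∧ B = B' :=
  row_shuffle_injective_general n p A B A' B' hAB hdisj hA hAB' hdisj' hA' heq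
end
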